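/- arXiv:2202.12651 — 15 statements merged into one kernel-verified Lean document; each statement's English description precedes it below -/
import Mathlib

section
/- In a quasi-regular mixed lattice group G, for all x, u ∈ G the element S_x(u) = min{w : w ≽ 0 and u ≤ w + x} (minimum with respect to ≤) exists and equals x⌄u − x = u − u⌃x, where ⌄ denotes the mixed upper envelope and ⌃ the mixed lower envelope. -/
/-- A mixed lattice group: an additive commutative group with two partial
orders (initial order `le`, specific order `sle`), both translation
invariant, in which the mixed upper envelope `uenv x y = min{w : x ≼ w, y ≤ w}`
and the mixed lower envelope `lenv x y = max{w : w ≼ x, w ≤ y}`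
(min/max with respect to `le`) exist. -/
structure MLG (G : Type*) [AddCommGroup G] where
  le : G → G → Prop
  sle : G → G → Prop
  le_refl : ∀ x, le x x
  le_trans : ∀ x y z, le x y → le y z → le x z
  le_antisymm : ∀ x y, le x y → le y x → x = y
  sle_refl : ∀ x, sle x x
  sle_trans : ∀ x y z, sle x y → sle y z → sle x z
  sle_antisymm : ∀ x y, sle x y → sle y x → x = y
  add_le_left : ∀ (z : G) {x y}, le x y → le (z + x) (z + y)
  add_sle_left : ∀ (z : G) {x y}, sle x y → sle (z + x) (z + y)
  uenv : G → G → G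
  lenv : G → G → G
  uenv_sle : ∀ x y, sle x (uenv x y)
  uenv_le : ∀ x y, le y (uenv x y)
  uenv_min : ∀ x y w, sle x w → le y w → le (uenv x y) w
  lenv_sle : ∀ x y, sle (lenv x y) x
  lenv_le : ∀ x y, le (lenv x y) y
  lenv_max : ∀ x y w, sle w x → le w y → le w (lenv x y)

/-- Quasi-regularity, in the equivalent form (M8a)&(M8b). -/
def MLG.QuasiRegular {G : Type*} [AddCommGroup G] (M : MLG G) : Prop :=
  (∀ x y z, M.sle x z → M.sle y z → M.sle (M.uenv x y) z) ∧
  (∀ x y z, M.sle z x → M.sle z y → M.sle z (M.lenv x y))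


private lemma MLG.le_congr {G : Type*} [AddCommGroup G] (M : MLG G) {a b c d : G}
    (h : M.le a b) (hc : a = c) (hd : b = d) : M.le c d := hc ▸ hd ▸ h

private lemma MLG.sle_congr {G : Type*} [AddCommGroup G] (M : MLG G) {a b c d : G}
    (h : M.sle a b) (hc : a = c) (hd : b = d) : M.sle c d := hc ▸ hd ▸ h

private lemma MLG.le_neg {G : Type*} [AddCommGroup G] (M : MLG G) {a b : G}
    (h : M.le a b) : M.le (-b) (-a) :=
  M.le_congr (M.add_le_left (-a - b) h) (by abel) (by abel)

private lemma MLG.sle_neg {G : Type*} [AddCommGroup G] (M : MLG G) {a b : G}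
    (h : M.sle a b) : M.sle (-b) (-a) :=
  M.sle_congr (M.add_sle_left (-a - b) h) (by abel) (by abel)

/-- In a quasi-regular mixed lattice group, `S_x(u) = min{w ≽ 0 : u ≤ w + x}`
exists and equals `x⌄u − x = u − u⌃x`. -/
theorem stmt0 {G : Type*} [AddCommGroup G] (M : MLG G) (hqr : M.QuasiRegular)
    (x u : G) :
    M.sle 0 (M.uenv x u - x) ∧
    M.le u ((M.uenv x u - x) + x) ∧
    (∀ w, M.sle 0 w → M.le u (w + x) → M.le (M.uenv x u - x) w) ∧
    M.uenv x u - x = u - M.lenv u x := by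
  have key : M.uenv x u = u + x - M.lenv u x := by
    apply M.le_antisymm
    · apply M.uenv_min
      · have h := M.add_sle_left (u + x) (M.sle_neg (M.lenv_sle u x))
        exact M.sle_congr h (by abel) (by abel)
      · have h := M.add_le_left (u + x) (M.le_neg (M.lenv_le u x))
        exact M.le_congr h (by abel) (by abel)
    · have h1 : M.sle (u + x - M.uenv x u) u :=
        M.sle_congr (M.add_sle_left (u + x) (M.sle_neg (M.uenv_sle x u))) (by abel) (by abel)
      have h2 : M.le (u + x - M.uenv x u) x :=
        M.le_congr (M.add_le_left (u + x) (M.le_neg (M.uenv_le x u))) (by abel) (by abel)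
      have h3 := M.lenv_max u x _ h1 h2
      exact M.le_congr (M.add_le_left (u + x - M.lenv u x - (u + x - M.uenv x u)) h3)
        (by abel) (by abel)
  refine ⟨?_, ?_, ?_, by rw [key]; abel⟩
  · exact M.sle_congr (M.add_sle_left (-x) (M.uenv_sle x u)) (by abel) (by abel)
  · exact M.le_congr (M.uenv_le x u) rfl (by abel)
  · intro w hw hu
    have h5 : M.sle x (w + x) := M.sle_congr (M.add_sle_left x hw) (by abel) (by abel)
    have h6 : M.le (M.uenv x u) (w + x) := M.uenv_min x u _ h5 hu
    exact M.le_congr (M.add_le_left (-x) h6) (by abel) (by abel)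
end

section
/- In a quasi-regular mixed lattice group, if x ≽ 0 then S_x(S_y(u)) = S_{x+y}(u) for all u, y, where S_x(u) = x⌄u − x. Moreover, if both x ≽ 0 and y ≽ 0, then S_x S_y(u) = S_y S_x(u) = S_{x+y}(u) for all u. -/
section Aux
variable {G : Type*} [AddCommGroup G] (M : MLG G)

lemma MLG.S_sle0 (x u : G) : M.sle 0 (M.uenv x u - x) := by
  have h := M.add_sle_left (-x) (M.uenv_sle x u)
  have e1 : -x + x = (0 : G) := by abel
  have e2 : -x + M.uenv x u = M.uenv x u - x := by abel
  rwa [e1, e2] at h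

lemma MLG.S_le (x u : G) : M.le u (M.uenv x u - x + x) := by
  have e : M.uenv x u - x + x = M.uenv x u := by abel
  rw [e]; exact M.uenv_le x u

lemma MLG.S_min (x u w : G) (hw : M.sle 0 w) (hu : M.le u (w + x)) :
    M.le (M.uenv x u - x) w := by
  have hxw : M.sle x (w + x) := by
    have h := M.add_sle_left x hw
    have e1 : x + 0 = x := by abel
    have e2 : x + w = w + x := by abel
    rwa [e1, e2] at h
  have h := M.add_le_left (-x) (M.uenv_min x u (w + x) hxw hu)
  have e1 : -x + M.uenv x u = M.uenv x u - x := by abel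
  have e2 : -x + (w + x) = w := by abel
  rwa [e1, e2] at h

lemma MLG.key (x y u : G) (hx : M.sle 0 x) :
    M.uenv x (M.uenv y u - y) - x = M.uenv (x + y) u - (x + y) := by
  set v := M.uenv y u - y with hv
  set w := M.uenv x v - x with hw
  set s := M.uenv (x + y) u - (x + y) with hs
  have hw0 : M.sle 0 w := M.S_sle0 x v
  have hs0 : M.sle 0 s := M.S_sle0 (x + y) u
  -- u ≤ w + (x+y)
  have hu : M.le u (w + (x + y)) := by
    have h1 : M.le u (v + y) := by
      have e : v + y = M.uenv y u := by rw [hv]; abel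
      rw [e]; exact M.uenv_le y u
    have h2 : M.le (v + y) (w + (x + y)) := by
      have h := M.add_le_left y (M.S_le x v)
      have e1 : y + v = v + y := by abel
      have e2 : y + (M.uenv x v - x + x) = (M.uenv x v - x) + (x + y) := by abel
      rw [e1, e2] at h
      exact h
    exact M.le_trans _ _ _ h1 h2
  have hsw : M.le s w := M.S_min (x + y) u w hw0 hu
  -- other direction
  have hsx0 : M.sle 0 (s + x) := by
    have h := M.add_sle_left s hx
    have e : s + 0 = s := by abel
    rw [e] at h
    exact M.sle_trans _ _ _ hs0 h
  have hus : M.le u (s + x + y) := by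
    have h := M.S_le (x + y) u
    have e : M.uenv (x + y) u - (x + y) + (x + y) = s + x + y := by rw [hs]; abel
    rwa [e] at h
  have hvs : M.le v (s + x) := M.S_min y u (s + x) hsx0 hus
  have hws : M.le w s := M.S_min x v s hs0 hvs
  exact M.le_antisymm _ _ hws hsw

end Aux

/-- In a quasi-regular mixed lattice group, with `S_x(u) = x⌄u − x`:
if `x ≽ 0` then `S_x(S_y(u)) = S_{x+y}(u)` for all `u, y`; and if moreover
`y ≽ 0` then `S_x S_y(u) = S_y S_x(u) = S_{x+y}(u)` for all `u`. -/
theorem stmt1 {G : Type*} [AddCommGroup G] (M : MLG G) (hqr : M.QuasiRegular) :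
    (∀ x y u : G, M.sle 0 x →
      M.uenv x (M.uenv y u - y) - x = M.uenv (x + y) u - (x + y)) ∧
    (∀ x y u : G, M.sle 0 x → M.sle 0 y →
      M.uenv x (M.uenv y u - y) - x = M.uenv y (M.uenv x u - x) - y ∧
      M.uenv x (M.uenv y u - y) - x = M.uenv (x + y) u - (x + y)) := by
  refine ⟨fun x y u hx => M.key x y u hx, fun x y u hx hy => ?_⟩
  have h1 := M.key x y u hx
  have h2 := M.key y x u hy
  rw [add_comm y x] at h2
  exact ⟨h1.trans h2.symm, h1⟩
end

section
/- In a quasi-regular mixed lattice group G, if x ≼ y then for every u ∈ G the inequalities u⌃x ≼ u⌃y and u⌄x ≼ u⌄y hold (specific-order monotonicity of the mixed envelopes in the second argument). -/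
private lemma MLG.cast_le {G : Type*} [AddCommGroup G] (M : MLG G) {a b a' b' : G}
    (h : M.le a b) (ha : a = a') (hb : b = b') : M.le a' b' := ha ▸ hb ▸ h

private lemma MLG.cast_sle {G : Type*} [AddCommGroup G] (M : MLG G) {a b a' b' : G}
    (h : M.sle a b) (ha : a = a') (hb : b = b') : M.sle a' b' := ha ▸ hb ▸ h

/-- In a quasi-regular mixed lattice group, if `x ≼ y` then
`u⌃x ≼ u⌃y` and `u⌄x ≼ u⌄y` for every `u`. -/
theorem stmt2 {G : Type*} [AddCommGroup G] (M : MLG G) (hqr : M.QuasiRegular)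
    (x y : G) (hxy : M.sle x y) (u : G) :
    M.sle (M.lenv u x) (M.lenv u y) ∧ M.sle (M.uenv u x) (M.uenv u y) := by
  obtain ⟨h8a, h8b⟩ := hqr
  constructor
  · -- lower envelope part
    set A := M.lenv u x with hA
    set B := M.lenv u y with hB
    have hAu : M.sle A u := M.lenv_sle u x
    have hAx : M.le A x := M.lenv_le u x
    have hBu : M.sle B u := M.lenv_sle u y
    have hBy : M.le B y := M.lenv_le u y
    -- Step 1 : B + (x - y) ≤ A, hence B ≤ A + (y - x)
    have s1a : M.sle (B + (x - y)) u :=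
      M.sle_trans _ (u + (x - y)) _
        (M.cast_sle (M.add_sle_left (x - y) hBu) (by abel) (by abel))
        (M.cast_sle (M.add_sle_left (u - y) hxy) (by abel) (by abel))
    have s1b : M.le (B + (x - y)) x :=
      M.cast_le (M.add_le_left (x - y) hBy) (by abel) (by abel)
    have s1 : M.le (B + (x - y)) A := M.lenv_max u x _ s1a s1b
    have s1' : M.le B (A + (y - x)) :=
      M.cast_le (M.add_le_left (y - x) s1) (by abel) (by abel)
    -- Step 2 : A ≼ lenv u (A + (y - x)) by (M8b)
    have hAE : M.sle A (M.lenv u (A + (y - x))) := by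
      refine h8b u (A + (y - x)) A hAu ?_
      exact M.cast_sle (M.add_sle_left (A - x) hxy) (by abel) (by abel)
    -- Step 3 : lenv u (A + (y - x)) = B
    have hEB : M.le (M.lenv u (A + (y - x))) B := by
      refine M.lenv_max u y _ (M.lenv_sle _ _) ?_
      refine M.le_trans _ (A + (y - x)) _ (M.lenv_le _ _) ?_
      exact M.cast_le (M.add_le_left (y - x) hAx) (by abel) (by abel)
    have hBE : M.le B (M.lenv u (A + (y - x))) := M.lenv_max u _ B hBu s1'
    have hE : M.lenv u (A + (y - x)) = B := M.le_antisymm _ _ hEB hBE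
    rwa [hE] at hAE
  · -- upper envelope part
    set P := M.uenv u x with hP
    set Q := M.uenv u y with hQ
    have hPu : M.sle u P := M.uenv_sle u x
    have hPx : M.le x P := M.uenv_le u x
    have hQu : M.sle u Q := M.uenv_sle u y
    have hQy : M.le y Q := M.uenv_le u y
    -- Step 1 : Q ≤ P + (y - x), hence Q + (x - y) ≤ P
    have s1a : M.sle u (P + (y - x)) :=
      M.sle_trans _ (u + (y - x)) _
        (M.cast_sle (M.add_sle_left (u - x) hxy) (by abel) (by abel))
        (M.cast_sle (M.add_sle_left (y - x) hPu) (by abel) (by abel))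
    have s1b : M.le y (P + (y - x)) :=
      M.cast_le (M.add_le_left (y - x) hPx) (by abel) (by abel)
    have s1 : M.le Q (P + (y - x)) := M.uenv_min u y _ s1a s1b
    have s1' : M.le (Q + (x - y)) P :=
      M.cast_le (M.add_le_left (x - y) s1) (by abel) (by abel)
    -- Step 2 : uenv u (Q + (x - y)) ≼ Q by (M8a)
    have hFQ : M.sle (M.uenv u (Q + (x - y))) Q := by
      refine h8a u (Q + (x - y)) Q hQu ?_
      exact M.cast_sle (M.add_sle_left (Q - y) hxy) (by abel) (by abel)
    -- Step 3 : uenv u (Q + (x - y)) = P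
    have hPF : M.le P (M.uenv u (Q + (x - y))) := by
      refine M.uenv_min u x _ (M.uenv_sle _ _) ?_
      refine M.le_trans _ (Q + (x - y)) _ ?_ (M.uenv_le _ _)
      exact M.cast_le (M.add_le_left (x - y) hQy) (by abel) (by abel)
    have hFP : M.le (M.uenv u (Q + (x - y))) P := M.uenv_min u _ P hPu s1'
    have hF : M.uenv u (Q + (x - y)) = P := M.le_antisymm _ _ hFP hPF
    rwa [hF] at hFQ
end

section
/- In a quasi-regular mixed lattice group, the one-sided associative laws (x⌃y)⌃z ≥ x⌃(y⌃z) and (x⌄y)⌄z ≤ x⌄(y⌄z), and the one-sided distributive laws x⌃(y⌄z) ≥ (x⌃y)⌄(x⌃z) and x⌄(y⌃z) ≤ (x⌄y)⌃(x⌄z), hold for all x, y, z. -/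
namespace MLG

variable {G : Type*} [AddCommGroup G] (M : MLG G)

lemma sle_congr_s3 {a b a' b' : G} (h : M.sle a b) (ha : a = a') (hb : b = b') :
    M.sle a' b' := ha ▸ hb ▸ h

lemma le_congr_s3 {a b a' b' : G} (h : M.le a b) (ha : a = a') (hb : b = b') :
    M.le a' b' := ha ▸ hb ▸ h

lemma sle_add_right (c : G) {a b : G} (h : M.sle a b) : M.sle (a + c) (b + c) :=
  M.sle_congr_s3 (M.add_sle_left c h) (add_comm c a) (add_comm c b)

lemma le_add_right (c : G) {a b : G} (h : M.le a b) : M.le (a + c) (b + c) :=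
  M.le_congr_s3 (M.add_le_left c h) (add_comm c a) (add_comm c b)

/-- Monotonicity of the mixed upper envelope with respect to the specific
order, in a quasi-regular mixed lattice group. -/
lemma mono_uenv (hqr : M.QuasiRegular) (u : G) {v v' : G} (h : M.sle v v') :
    M.sle (M.uenv u v) (M.uenv u v') := by
  set A := M.uenv u v with hA
  set B := M.uenv u v' with hB
  -- A ≼ A + (v' - v)
  have hAAd : M.sle A (A + (v' - v)) :=
    M.sle_congr_s3 (M.sle_add_right (A - v) h) (by abel) (by abel)
  -- B - (v' - v) ≼ B
  have hBdB : M.sle (B - (v' - v)) B :=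
    M.sle_congr_s3 (M.sle_add_right (B - v') h) (by abel) (by abel)
  -- B ≤ A + (v' - v)
  have h2 : M.le B (A + (v' - v)) := by
    refine M.uenv_min u v' _ (M.sle_trans u A _ (M.uenv_sle u v) hAAd) ?_
    exact M.le_congr_s3 (M.le_add_right (v' - v) (M.uenv_le u v)) (by abel) rfl
  -- the auxiliary element n = (B ⌃ A)
  set n := M.lenv B A with hn
  have h3 : M.sle u n := hqr.2 B A u (M.uenv_sle u v') (M.uenv_sle u v)
  -- v ≤ B - (v' - v) ≤ n
  have h4a : M.le v (B - (v' - v)) :=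
    M.le_congr_s3 (M.le_add_right (v - v') (M.uenv_le u v')) (by abel) (by abel)
  have h4b : M.le (B - (v' - v)) A :=
    M.le_congr_s3 (M.le_add_right (-(v' - v)) h2) (by abel) (by abel)
  have h4c : M.le (B - (v' - v)) n := M.lenv_max B A _ hBdB h4b
  have h4 : M.le v n := M.le_trans _ _ _ h4a h4c
  -- A = n
  have h5 : M.le A n := M.uenv_min u v n h3 h4
  have h6 : M.le n A := M.lenv_le B A
  have hAn : A = n := M.le_antisymm A n h5 h6
  -- conclude: A = n ≼ B
  have := M.lenv_sle B A
  rw [← hn, ← hAn] at this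
  exact this

/-- Monotonicity of the mixed lower envelope with respect to the specific
order, in a quasi-regular mixed lattice group. -/
lemma mono_lenv (hqr : M.QuasiRegular) (u : G) {v v' : G} (h : M.sle v v') :
    M.sle (M.lenv u v) (M.lenv u v') := by
  set A := M.lenv u v' with hA
  set B := M.lenv u v with hB
  -- A - (v' - v) ≼ A
  have hAdA : M.sle (A - (v' - v)) A :=
    M.sle_congr_s3 (M.sle_add_right (A - v') h) (by abel) (by abel)
  -- B ≼ B + (v' - v)
  have hBBd : M.sle B (B + (v' - v)) :=
    M.sle_congr_s3 (M.sle_add_right (B - v) h) (by abel) (by abel)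
  -- A - (v' - v) ≤ B
  have h2 : M.le (A - (v' - v)) B := by
    refine M.lenv_max u v _ (M.sle_trans _ A u hAdA (M.lenv_sle u v')) ?_
    exact M.le_congr_s3 (M.le_add_right (v - v') (M.lenv_le u v')) (by abel) (by abel)
  -- the auxiliary element n = (B ⌄ A)
  set n := M.uenv B A with hn
  have h3 : M.sle n u := hqr.1 B A u (M.lenv_sle u v) (M.lenv_sle u v')
  -- n ≤ B + (v' - v) ≤ v'
  have h4a : M.le A (B + (v' - v)) :=
    M.le_congr_s3 (M.le_add_right (v' - v) h2) (by abel) rfl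
  have h4b : M.le n (B + (v' - v)) := M.uenv_min B A _ hBBd h4a
  have h4c : M.le (B + (v' - v)) v' :=
    M.le_congr_s3 (M.le_add_right (v' - v) (M.lenv_le u v)) rfl (by abel)
  have h4 : M.le n v' := M.le_trans _ _ _ h4b h4c
  -- A = n
  have h5 : M.le n A := M.lenv_max u v' n h3 h4
  have h6 : M.le A n := M.uenv_le B A
  have hAn : A = n := M.le_antisymm A n h6 h5
  -- conclude: B ≼ n = A
  have := M.uenv_sle B A
  rw [← hn, ← hAn] at this
  exact this

end MLG

/-- One-sided associative and distributive laws in a quasi-regular mixed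
lattice group. -/
theorem stmt3 {G : Type*} [AddCommGroup G] (M : MLG G) (hqr : M.QuasiRegular)
    (x y z : G) :
    M.le (M.lenv x (M.lenv y z)) (M.lenv (M.lenv x y) z) ∧
    M.le (M.uenv (M.uenv x y) z) (M.uenv x (M.uenv y z)) ∧
    M.le (M.uenv (M.lenv x y) (M.lenv x z)) (M.lenv x (M.uenv y z)) ∧
    M.le (M.uenv x (M.lenv y z)) (M.lenv (M.uenv x y) (M.uenv x z)) := by
  refine ⟨?_, ?_, ?_, ?_⟩
  · -- (x ⌃ (y ⌃ z)) ≤ ((x ⌃ y) ⌃ z)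
    refine M.lenv_max (M.lenv x y) z _ ?_ ?_
    · exact M.mono_lenv hqr x (M.lenv_sle y z)
    · exact M.le_trans _ _ _ (M.lenv_le x (M.lenv y z)) (M.lenv_le y z)
  · -- ((x ⌄ y) ⌄ z) ≤ (x ⌄ (y ⌄ z))
    refine M.uenv_min (M.uenv x y) z _ ?_ ?_
    · exact M.mono_uenv hqr x (M.uenv_sle y z)
    · exact M.le_trans _ _ _ (M.uenv_le y z) (M.uenv_le x (M.uenv y z))
  · -- ((x ⌃ y) ⌄ (x ⌃ z)) ≤ (x ⌃ (y ⌄ z))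
    refine M.uenv_min (M.lenv x y) (M.lenv x z) _ ?_ ?_
    · exact M.mono_lenv hqr x (M.uenv_sle y z)
    · exact M.lenv_max x (M.uenv y z) _ (M.lenv_sle x z)
        (M.le_trans _ _ _ (M.lenv_le x z) (M.uenv_le y z))
  · -- (x ⌄ (y ⌃ z)) ≤ ((x ⌄ y) ⌃ (x ⌄ z))
    refine M.lenv_max (M.uenv x y) (M.uenv x z) _ ?_ ?_
    · exact M.mono_uenv hqr x (M.lenv_sle y z)
    · exact M.uenv_min x (M.lenv y z) _ (M.uenv_sle x z)
        (M.le_trans _ _ _ (M.lenv_le y z) (M.uenv_le x z))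
end

section
/- Dominated decomposition: let G be a quasi-regular mixed lattice group and let u ≽ 0, v₁ ≥ 0, v₂ ≽ 0 satisfy u ≤ v₁ + v₂. Then there exist u₁, u₂ with 0 ≤ u₁ ≤ v₁, 0 ≼ u₂ ≤ v₂ and u = u₁ + u₂. Moreover, if v₁ ≽ 0 then u₁ ≽ 0, and if u ≼ v₁ + v₂ then u₂ ≼ v₂. -/
/-- Dominated decomposition in a quasi-regular mixed lattice group. -/
theorem stmt5 {G : Type*} [AddCommGroup G] (M : MLG G) (hqr : M.QuasiRegular)
    (u v₁ v₂ : G) (hu : M.sle 0 u) (hv₁ : M.le 0 v₁) (hv₂ : M.sle 0 v₂)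
    (hsum : M.le u (v₁ + v₂)) :
    ∃ u₁ u₂ : G, M.le 0 u₁ ∧ M.le u₁ v₁ ∧ M.sle 0 u₂ ∧ M.le u₂ v₂ ∧
      u = u₁ + u₂ ∧ (M.sle 0 v₁ → M.sle 0 u₁) ∧
      (M.sle u (v₁ + v₂) → M.sle u₂ v₂) := by
  set u₁ := M.lenv u v₁ with hu₁
  refine ⟨u₁, u - u₁, ?_, M.lenv_le u v₁, ?_, ?_, by abel, ?_, ?_⟩
  · exact M.lenv_max u v₁ 0 hu hv₁
  · have h := M.add_sle_left (-u₁) (M.lenv_sle u v₁)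
    have e : -u₁ + u₁ = (0:G) := by abel
    rw [e] at h
    have e2 : -u₁ + u = u - u₁ := by abel
    rwa [e2] at h
  · -- le (u - u₁) v₂ from le (u - v₂) u₁
    have h1 : M.sle (u - v₂) u := by
      have h := M.add_sle_left (u - v₂) hv₂
      have e : u - v₂ + 0 = u - v₂ := by abel
      have e2 : u - v₂ + v₂ = u := by abel
      rwa [e, e2] at h
    have h2 : M.le (u - v₂) v₁ := by
      have h := M.add_le_left (-v₂) hsum
      have e : -v₂ + u = u - v₂ := by abel
      have e2 : -v₂ + (v₁ + v₂) = v₁ := by abel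
      rwa [e, e2] at h
    have h := M.add_le_left (v₂ - u₁) (M.lenv_max u v₁ (u - v₂) h1 h2)
    have e : v₂ - u₁ + (u - v₂) = u - u₁ := by abel
    have e2 : v₂ - u₁ + u₁ = v₂ := by abel
    rwa [e, e2] at h
  · intro hv₁s
    exact hqr.2 u v₁ 0 hu hv₁s
  · intro hs
    have h1 : M.sle (u - v₂) u := by
      have h := M.add_sle_left (u - v₂) hv₂
      have e : u - v₂ + 0 = u - v₂ := by abel
      have e2 : u - v₂ + v₂ = u := by abel
      rwa [e, e2] at h
    have h2 : M.sle (u - v₂) v₁ := by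
      have h := M.add_sle_left (-v₂) hs
      have e : -v₂ + u = u - v₂ := by abel
      have e2 : -v₂ + (v₁ + v₂) = v₁ := by abel
      rwa [e, e2] at h
    have h := M.add_sle_left (v₂ - u₁) (hqr.2 u v₁ (u - v₂) h1 h2)
    have e : v₂ - u₁ + (u - v₂) = u - u₁ := by abel
    have e2 : v₂ - u₁ + u₁ = v₂ := by abel
    rwa [e, e2] at h
end

section
/- Dominated decomposition (dual form): let G be a quasi-regular mixed lattice group and let u ≥ 0, v₁ ≽ 0, v₂ ≥ 0 satisfy u ≼ v₁ + v₂. Then there exist u₁, u₂ with 0 ≤ u₁ ≼ v₁, 0 ≤ u₂ ≤ v₂ and u = u₁ + u₂. Moreover, if u ≽ 0 then u₁ ≽ 0. -/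
/-- Dominated decomposition (dual form) in a quasi-regular mixed lattice
group. -/
theorem stmt6 {G : Type*} [AddCommGroup G] (M : MLG G) (hqr : M.QuasiRegular)
    (u v₁ v₂ : G) (hu : M.le 0 u) (hv₁ : M.sle 0 v₁) (hv₂ : M.le 0 v₂)
    (hsum : M.sle u (v₁ + v₂)) :
    ∃ u₁ u₂ : G, M.le 0 u₁ ∧ M.sle u₁ v₁ ∧ M.le 0 u₂ ∧ M.le u₂ v₂ ∧
      u = u₁ + u₂ ∧ (M.sle 0 u → M.sle 0 u₁) := by
  refine ⟨M.lenv v₁ u, u - M.lenv v₁ u, ?_, M.lenv_sle v₁ u, ?_, ?_, by abel, ?_⟩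
  · exact M.lenv_max v₁ u 0 hv₁ hu
  · have h := M.add_le_left (u - M.lenv v₁ u - 0) (M.lenv_le v₁ u)
    have e1 : u - M.lenv v₁ u - 0 + M.lenv v₁ u = u := by abel
    have e2 : u - M.lenv v₁ u - 0 + u = u - M.lenv v₁ u + u := by abel
    rw [e1, e2] at h
    have h2 := M.add_le_left (-u) h
    have e3 : -u + u = (0 : G) := by abel
    have e4 : -u + (u - M.lenv v₁ u + u) = u - M.lenv v₁ u := by abel
    rw [e3, e4] at h2
    exact h2
  · -- u - lenv v₁ u ≤ v₂, i.e. u - v₂ ≤ lenv v₁ u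
    have hs : M.sle (u - v₂) v₁ := by
      have h := M.add_sle_left (-v₂) hsum
      have e1 : -v₂ + u = u - v₂ := by abel
      have e2 : -v₂ + (v₁ + v₂) = v₁ := by abel
      rw [e1, e2] at h; exact h
    have hl : M.le (u - v₂) u := by
      have h := M.add_le_left (u - v₂) hv₂
      have e1 : u - v₂ + 0 = u - v₂ := by abel
      have e2 : u - v₂ + v₂ = u := by abel
      rw [e1, e2] at h; exact h
    have h := M.lenv_max v₁ u (u - v₂) hs hl
    have h2 := M.add_le_left (v₂ - M.lenv v₁ u) h
    have e1 : v₂ - M.lenv v₁ u + (u - v₂) = u - M.lenv v₁ u := by abel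
    have e2 : v₂ - M.lenv v₁ u + M.lenv v₁ u = v₂ := by abel
    rw [e1, e2] at h2; exact h2
  · intro hsu
    exact hqr.2 v₁ u 0 hv₁ hsu
end

section
/- In a quasi-regular mixed lattice vector space V, every face of the specific positive cone V_sp = {x : x ≽ 0} is a mixed lattice sub-cone of V_sp, i.e. it is closed under the mixed envelopes ⌄ and ⌃. -/
/-- A mixed lattice vector space over ℝ: a mixed lattice group that is a real
vector space in which both orders are compatible with multiplication by
nonnegative scalars. -/
structure MLS (V : Type*) [AddCommGroup V] [Module ℝ V] extends MLG V where
  smul_le : ∀ (a : ℝ), 0 ≤ a → ∀ x y, le x y → le (a • x) (a • y)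
  smul_sle : ∀ (a : ℝ), 0 ≤ a → ∀ x y, sle x y → sle (a • x) (a • y)

namespace MLS

variable {V : Type*} [AddCommGroup V] [Module ℝ V] (M : MLS V)

def QuasiRegular : Prop := M.toMLG.QuasiRegular

/-- `S` is a linear subspace of `V`. -/
def IsSubspace (_ : MLS V) (S : Set V) : Prop :=
  (0:V) ∈ S ∧ (∀ x ∈ S, ∀ y ∈ S, x + y ∈ S) ∧ (∀ (a : ℝ), ∀ x ∈ S, a • x ∈ S)

/-- A mixed lattice subspace: a subspace closed under both mixed envelopes. -/
def IsMLSubspace (S : Set V) : Prop :=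
  M.IsSubspace S ∧ ∀ x ∈ S, ∀ y ∈ S, M.uenv x y ∈ S ∧ M.lenv x y ∈ S

/-- An ideal: a (≤)-order convex mixed lattice subspace. -/
def IsIdeal (S : Set V) : Prop :=
  M.IsMLSubspace S ∧ ∀ x y, M.le 0 y → M.le y x → x ∈ S → y ∈ S

/-- A specific ideal: a (≼)-order convex mixed lattice subspace. -/
def IsSpecificIdeal (S : Set V) : Prop :=
  M.IsMLSubspace S ∧ ∀ x y, M.sle 0 y → M.sle y x → x ∈ S → y ∈ S

/-- A quasi-ideal: a mixed-order convex mixed lattice subspace. -/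
def IsQuasiIdeal (S : Set V) : Prop :=
  M.IsMLSubspace S ∧ ∀ x y, M.sle 0 y → M.le y x → x ∈ S → y ∈ S

/-- The (≼)-positive elements of `S`. -/
def sp (S : Set V) : Set V := {x ∈ S | M.sle 0 x}

/-- The (≤)-positive elements of `S`. -/
def pos (S : Set V) : Set V := {x ∈ S | M.le 0 x}

/-- `S` is regular: `S = S_sp - S_sp`. -/
def Regular (S : Set V) : Prop :=
  ∀ x ∈ S, ∃ u ∈ M.sp S, ∃ v ∈ M.sp S, x = u - v

/-- A cone: closed under addition and nonnegative scalar multiplication,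
with `C ∩ (-C) = {0}`. -/
def IsCone (_ : MLS V) (C : Set V) : Prop :=
  (∀ (a : ℝ), 0 ≤ a → ∀ x ∈ C, a • x ∈ C) ∧ (∀ x ∈ C, ∀ y ∈ C, x + y ∈ C) ∧
  (∀ x, x ∈ C → -x ∈ C → x = 0)

/-- A mixed lattice cone: a cone closed under both mixed envelopes. -/
def IsMLCone (C : Set V) : Prop :=
  M.IsCone C ∧ ∀ x ∈ C, ∀ y ∈ C, M.uenv x y ∈ C ∧ M.lenv x y ∈ C

/-- The algebraic sum of two sets. -/
def sumS (_ : MLS V) (A B : Set V) : Set V := {x | ∃ a ∈ A, ∃ b ∈ B, x = a + b}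

/-- The upper part `ᵘx = x ⌄ 0`. -/
def upp (x : V) : V := M.uenv x 0

/-- The lower part `ˡx = (-x) ⌄ 0`. -/
def lowp (x : V) : V := M.uenv (-x) 0

/-- The specific upper part `x^u = 0 ⌄ x`. -/
def uspec (x : V) : V := M.uenv 0 x

/-- The specific lower part `x^l = 0 ⌄ (-x)`. -/
def lspec (x : V) : V := M.uenv 0 (-x)

/-- The symmetric generalized absolute value `s(x) = ½(⌐x¬ + ¬x⌐)`,
where `⌐x¬ = ᵘx + x^l` and `¬x⌐ = ˡx + x^u`. -/
noncomputable def sav (x : V) : V := (2:ℝ)⁻¹ • ((M.upp x + M.lspec x) + (M.lowp x + M.uspec x))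

end MLS

lemma MLG.key_s7 {G : Type*} [AddCommGroup G] (M : MLG G) (x y : G) :
    M.uenv x y + M.lenv y x = x + y := by
  set u := M.uenv x y with hu
  set l := M.lenv y x with hl
  have h1 : M.le (x + y - u) l := by
    apply M.lenv_max
    · have h := M.add_sle_left (y - u) (M.uenv_sle x y)
      have e3 : y - u + x = x + y - u := by abel
      have e4 : y - u + u = y := by abel
      rwa [e3, e4] at h
    · have h := M.add_le_left (x - u) (M.uenv_le x y)
      have e3 : x - u + y = x + y - u := by abel
      have e4 : x - u + u = x := by abel
      rwa [e3, e4] at h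
  have h2 : M.le u (x + y - l) := by
    apply M.uenv_min
    · have h := M.add_sle_left (x - l) (M.lenv_sle y x)
      have e3 : x - l + l = x := by abel
      have e4 : x - l + y = x + y - l := by abel
      rwa [e3, e4] at h
    · have h := M.add_le_left (y - l) (M.lenv_le y x)
      have e3 : y - l + l = y := by abel
      have e4 : y - l + x = x + y - l := by abel
      rwa [e3, e4] at h
  apply M.le_antisymm
  · have h := M.add_le_left l h2
    have e3 : l + u = u + l := by abel
    have e4 : l + (x + y - l) = x + y := by abel
    rwa [e3, e4] at h
  · have h := M.add_le_left u h1
    have e4 : u + (x + y - u) = x + y := by abel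
    rwa [e4] at h

/-- Every face of the specific positive cone `V_sp = {x : x ≽ 0}` of a
quasi-regular mixed lattice vector space is a mixed lattice sub-cone, i.e.
it is closed under the mixed envelopes. -/
theorem stmt7 {V : Type*} [AddCommGroup V] [Module ℝ V] (M : MLS V)
    (hqr : M.QuasiRegular) (F : Set V)
    (hFsub : F ⊆ {x | M.sle 0 x})
    (hFcone : M.IsCone F)
    (hFface : ∀ x y, M.sle 0 x → M.sle 0 y → x + y ∈ F → x ∈ F ∧ y ∈ F) :
    ∀ x ∈ F, ∀ y ∈ F, M.uenv x y ∈ F ∧ M.lenv x y ∈ F := by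
  intro x hx y hy
  have hx0 : M.sle 0 x := hFsub hx
  have hy0 : M.sle 0 y := hFsub hy
  have hxy : x + y ∈ F := hFcone.2.1 x hx y hy
  constructor
  · -- uenv x y + lenv y x = x + y
    have hkey := M.toMLG.key_s7 x y
    have hu0 : M.sle 0 (M.uenv x y) := M.sle_trans _ _ _ hx0 (M.uenv_sle x y)
    have hl0 : M.sle 0 (M.lenv y x) := hqr.2 y x 0 hy0 hx0
    have := hFface _ _ hu0 hl0 (by rw [hkey]; exact hxy)
    exact this.1
  · -- uenv y x + lenv x y = y + x
    have hkey := M.toMLG.key_s7 y x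
    have hu0 : M.sle 0 (M.uenv y x) := M.sle_trans _ _ _ hy0 (M.uenv_sle y x)
    have hl0 : M.sle 0 (M.lenv x y) := hqr.2 x y 0 hx0 hy0
    have := hFface _ _ hu0 hl0 (by rw [hkey, add_comm]; exact hxy)
    exact this.2
end

section
/- Let V be a quasi-regular mixed lattice vector space, A an ideal of V, and W = A_sp − A_sp the subspace generated by the specifically positive elements of A. Then W is a quasi-ideal, and there is no ideal B with W ⊂ B ⊂ A and B ≠ A; in particular, if W is an ideal then W = A. -/
section Aux

variable {V : Type*} [AddCommGroup V] [Module ℝ V] (M : MLS V)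

theorem MLS.my_sle_add {a b : V} (ha : M.sle 0 a) (hb : M.sle 0 b) :
    M.sle 0 (a + b) := by
  have h := M.add_sle_left a hb
  rw [add_zero] at h
  exact M.sle_trans 0 a (a + b) ha h

theorem MLS.my_uenv_add (z x y : V) :
    M.uenv (z + x) (z + y) = z + M.uenv x y := by
  apply M.le_antisymm
  · exact M.uenv_min _ _ _ (M.add_sle_left z (M.uenv_sle x y))
      (M.add_le_left z (M.uenv_le x y))
  · have h1 : M.sle x (-z + M.uenv (z + x) (z + y)) := by
      have h := M.add_sle_left (-z) (M.uenv_sle (z + x) (z + y))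
      rwa [neg_add_cancel_left] at h
    have h2 : M.le y (-z + M.uenv (z + x) (z + y)) := by
      have h := M.add_le_left (-z) (M.uenv_le (z + x) (z + y))
      rwa [neg_add_cancel_left] at h
    have h3 := M.uenv_min x y _ h1 h2
    have h4 := M.add_le_left z h3
    rwa [add_neg_cancel_left] at h4

theorem MLS.my_lenv_add (z x y : V) :
    M.lenv (z + x) (z + y) = z + M.lenv x y := by
  apply M.le_antisymm
  · have h1 : M.sle (-z + M.lenv (z + x) (z + y)) x := by
      have h := M.add_sle_left (-z) (M.lenv_sle (z + x) (z + y))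
      rwa [neg_add_cancel_left] at h
    have h2 : M.le (-z + M.lenv (z + x) (z + y)) y := by
      have h := M.add_le_left (-z) (M.lenv_le (z + x) (z + y))
      rwa [neg_add_cancel_left] at h
    have h3 := M.lenv_max x y _ h1 h2
    have h4 := M.add_le_left z h3
    rwa [add_neg_cancel_left] at h4
  · exact M.lenv_max _ _ _ (M.add_sle_left z (M.lenv_sle x y))
      (M.add_le_left z (M.lenv_le x y))

/-- In a quasi-regular space the specific order is stronger than the
initial order. -/
theorem MLS.my_sle_le (hqr : M.QuasiRegular) {x y : V} (h : M.sle x y) :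
    M.le x y := by
  have h1 : M.sle (-y + x) (-y + y) := M.add_sle_left (-y) h
  rw [neg_add_cancel] at h1
  have h2 : M.sle (M.uenv 0 (-y + x)) 0 := hqr.1 0 (-y + x) 0 (M.sle_refl 0) h1
  have h3 : M.uenv 0 (-y + x) = 0 :=
    M.sle_antisymm _ _ h2 (M.uenv_sle 0 (-y + x))
  have h4 := M.uenv_le 0 (-y + x)
  rw [h3] at h4
  have h5 := M.add_le_left y h4
  rwa [add_neg_cancel_left, add_zero] at h5

end Aux

/-- If `A` is an ideal and `W = A_sp − A_sp`, then `W` is a quasi-ideal and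
no ideal lies strictly between `W` and `A`; in particular if `W` is an
ideal then `W = A`. -/
theorem stmt8 {V : Type*} [AddCommGroup V] [Module ℝ V] (M : MLS V)
    (hqr : M.QuasiRegular) (A : Set V) (hA : M.IsIdeal A)
    (W : Set V) (hW : W = {x | ∃ u ∈ M.sp A, ∃ v ∈ M.sp A, x = u - v}) :
    M.IsQuasiIdeal W ∧
    (∀ B, M.IsIdeal B → W ⊆ B → B ⊆ A → B = A) ∧
    (M.IsIdeal W → W = A) := by
  obtain ⟨⟨⟨hA0, hAadd, hAsmul⟩, hAenv⟩, hAconv⟩ := hA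
  have hspadd : ∀ u ∈ M.sp A, ∀ v ∈ M.sp A, u + v ∈ M.sp A := fun u hu v hv =>
    ⟨hAadd u hu.1 v hv.1, M.my_sle_add hu.2 hv.2⟩
  have hspsmul : ∀ (a : ℝ), 0 ≤ a → ∀ u ∈ M.sp A, a • u ∈ M.sp A := by
    intro a ha u hu
    refine ⟨hAsmul a u hu.1, ?_⟩
    have h := M.smul_sle a ha 0 u hu.2
    rwa [smul_zero] at h
  have hsp0 : (0:V) ∈ M.sp A := ⟨hA0, M.sle_refl 0⟩
  have hWmem : ∀ u ∈ M.sp A, ∀ v ∈ M.sp A, u - v ∈ W := by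
    intro u hu v hv
    rw [hW]
    exact ⟨u, hu, v, hv, rfl⟩
  have hspW : ∀ u ∈ M.sp A, u ∈ W := by
    intro u hu
    have h := hWmem u hu 0 hsp0
    rwa [sub_zero] at h
  have hWA : W ⊆ A := by
    intro x hx
    rw [hW] at hx
    obtain ⟨u, hu, v, hv, rfl⟩ := hx
    have h : u + (-1 : ℝ) • v ∈ A := hAadd u hu.1 _ (hAsmul (-1) v hv.1)
    rwa [neg_one_smul, ← sub_eq_add_neg] at h
  have hWsub : M.IsSubspace W := by
    refine ⟨?_, ?_, ?_⟩
    · have h := hWmem 0 hsp0 0 hsp0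
      rwa [sub_zero] at h
    · intro x hx y hy
      rw [hW] at hx hy
      obtain ⟨u, hu, v, hv, rfl⟩ := hx
      obtain ⟨u', hu', v', hv', rfl⟩ := hy
      have h := hWmem (u + u') (hspadd _ hu _ hu') (v + v') (hspadd _ hv _ hv')
      have e : (u + u') - (v + v') = (u - v) + (u' - v') := by abel
      rwa [e] at h
    · intro a x hx
      rw [hW] at hx
      obtain ⟨u, hu, v, hv, rfl⟩ := hx
      rcases le_or_gt 0 a with ha | ha
      · have h := hWmem _ (hspsmul a ha u hu) _ (hspsmul a ha v hv)
        rwa [← smul_sub] at h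
      · have ha' : (0:ℝ) ≤ -a := by linarith
        have h := hWmem _ (hspsmul (-a) ha' v hv) _ (hspsmul (-a) ha' u hu)
        have e : (-a) • v - (-a) • u = a • (u - v) := by
          rw [neg_smul, neg_smul, smul_sub]
          abel
        rwa [e] at h
  have hWenv : ∀ x ∈ W, ∀ y ∈ W, M.uenv x y ∈ W ∧ M.lenv x y ∈ W := by
    intro x hx y hy
    rw [hW] at hx hy
    obtain ⟨u, hu, v, hv, rfl⟩ := hx
    obtain ⟨u', hu', v', hv', rfl⟩ := hy
    have hsA : v + v' ∈ M.sp A := hspadd _ hv _ hv'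
    have e1 : (v + v') + (u - v) = u + v' := by abel
    have e2 : (v + v') + (u' - v') = u' + v := by abel
    have hxs : (v + v') + (u - v) ∈ M.sp A := by
      rw [e1]; exact hspadd _ hu _ hv'
    have hys : (v + v') + (u' - v') ∈ M.sp A := by
      rw [e2]; exact hspadd _ hu' _ hv
    constructor
    · have hEA : M.uenv ((v + v') + (u - v)) ((v + v') + (u' - v')) ∈ A :=
        (hAenv _ hxs.1 _ hys.1).1
      have hEs : M.sle 0 (M.uenv ((v + v') + (u - v)) ((v + v') + (u' - v'))) :=
        M.sle_trans _ _ _ hxs.2 (M.uenv_sle _ _)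
      have h := hWmem _ ⟨hEA, hEs⟩ _ hsA
      have e : M.uenv ((v + v') + (u - v)) ((v + v') + (u' - v')) - (v + v') =
          M.uenv (u - v) (u' - v') := by
        rw [M.my_uenv_add]
        abel
      rwa [e] at h
    · have hEA : M.lenv ((v + v') + (u - v)) ((v + v') + (u' - v')) ∈ A :=
        (hAenv _ hxs.1 _ hys.1).2
      have hEs : M.sle 0 (M.lenv ((v + v') + (u - v)) ((v + v') + (u' - v'))) :=
        hqr.2 _ _ 0 hxs.2 hys.2
      have h := hWmem _ ⟨hEA, hEs⟩ _ hsA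
      have e : M.lenv ((v + v') + (u - v)) ((v + v') + (u' - v')) - (v + v') =
          M.lenv (u - v) (u' - v') := by
        rw [M.my_lenv_add]
        abel
      rwa [e] at h
  have hWconv : ∀ x y, M.sle 0 y → M.le y x → x ∈ W → y ∈ W := by
    intro x y hy0 hyx hxW
    have hxA : x ∈ A := hWA hxW
    have htA : M.uenv 0 x ∈ A := (hAenv 0 hA0 x hxA).1
    have hyt : M.le y (M.uenv 0 x) := M.le_trans _ _ _ hyx (M.uenv_le 0 x)
    have h0y : M.le 0 y := M.my_sle_le hqr hy0
    have hyA : y ∈ A := hAconv (M.uenv 0 x) y h0y hyt htA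
    exact hspW y ⟨hyA, hy0⟩
  have part2 : ∀ B, M.IsIdeal B → W ⊆ B → B ⊆ A → B = A := by
    intro B hB hWB hBA
    obtain ⟨⟨⟨hB0, hBadd, hBsmul⟩, hBenv⟩, hBconv⟩ := hB
    apply Set.Subset.antisymm hBA
    intro x hxA
    have hxpn : x = M.uenv 0 x - M.uenv (-x) 0 := by
      have h := M.my_uenv_add x (-x) 0
      rw [add_neg_cancel, add_zero] at h
      rw [h]
      abel
    have hpsp : M.uenv 0 x ∈ M.sp A := ⟨(hAenv 0 hA0 x hxA).1, M.uenv_sle 0 x⟩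
    have hpB : M.uenv 0 x ∈ B := hWB (hspW _ hpsp)
    have hnegA : -x ∈ A := by
      have h := hAsmul (-1) x hxA
      rwa [neg_one_smul] at h
    have hnA : M.uenv (-x) 0 ∈ A := (hAenv (-x) hnegA 0 hA0).1
    have hn0 : M.le 0 (M.uenv (-x) 0) := M.uenv_le (-x) 0
    have hn'sp : M.uenv 0 (M.uenv (-x) 0) ∈ M.sp A :=
      ⟨(hAenv 0 hA0 _ hnA).1, M.uenv_sle 0 _⟩
    have hnB : M.uenv (-x) 0 ∈ B :=
      hBconv (M.uenv 0 (M.uenv (-x) 0)) (M.uenv (-x) 0) hn0 (M.uenv_le 0 _)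
        (hWB (hspW _ hn'sp))
    have h : M.uenv 0 x + (-1:ℝ) • M.uenv (-x) 0 ∈ B :=
      hBadd _ hpB _ (hBsmul (-1) _ hnB)
    rw [neg_one_smul, ← sub_eq_add_neg, ← hxpn] at h
    exact h
  exact ⟨⟨⟨hWsub, hWenv⟩, hWconv⟩, part2,
    fun h => part2 W h (fun _ hz => hz) hWA⟩
end

section
/- If A and B are quasi-ideals of a quasi-regular mixed lattice vector space V, then (A + B)_sp = A_sp + B_sp; moreover, if A and B are both regular then A + B is a regular quasi-ideal. -/
section Aux

variable {V : Type*} [AddCommGroup V] [Module ℝ V] (M : MLS V)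

lemma aux_le_shift (c x y : V) : M.le x y ↔ M.le (x + c) (y + c) := by
  constructor
  · intro h
    have h2 := M.add_le_left c h
    rwa [add_comm c x, add_comm c y] at h2
  · intro h
    have h2 := M.add_le_left (-c) h
    have e1 : -c + (x + c) = x := by abel
    have e2 : -c + (y + c) = y := by abel
    rwa [e1, e2] at h2

lemma aux_sle_shift (c x y : V) : M.sle x y ↔ M.sle (x + c) (y + c) := by
  constructor
  · intro h
    have h2 := M.add_sle_left c h
    rwa [add_comm c x, add_comm c y] at h2
  · intro h
    have h2 := M.add_sle_left (-c) h
    have e1 : -c + (x + c) = x := by abel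
    have e2 : -c + (y + c) = y := by abel
    rwa [e1, e2] at h2

lemma aux_add_le {x y z w : V} (h1 : M.le x y) (h2 : M.le z w) :
    M.le (x + z) (y + w) :=
  M.le_trans _ _ _ ((aux_le_shift M z x y).1 h1) (M.add_le_left y h2)

lemma aux_add_sle {x y z w : V} (h1 : M.sle x y) (h2 : M.sle z w) :
    M.sle (x + z) (y + w) :=
  M.sle_trans _ _ _ ((aux_sle_shift M z x y).1 h1) (M.add_sle_left y h2)

lemma aux_uenv_add (c x y : V) : M.uenv (x + c) (y + c) = M.uenv x y + c := by
  apply M.le_antisymm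
  · exact M.uenv_min _ _ _ ((aux_sle_shift M c x _).1 (M.uenv_sle x y))
      ((aux_le_shift M c y _).1 (M.uenv_le x y))
  · have h1 : M.sle x (M.uenv (x + c) (y + c) - c) := by
      have h := M.uenv_sle (x + c) (y + c)
      have := (aux_sle_shift M (-c) (x + c) (M.uenv (x + c) (y + c))).1 h
      have e1 : x + c + -c = x := by abel
      have e2 : M.uenv (x + c) (y + c) + -c = M.uenv (x + c) (y + c) - c := by abel
      rwa [e1, e2] at this
    have h2 : M.le y (M.uenv (x + c) (y + c) - c) := by
      have h := M.uenv_le (x + c) (y + c)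
      have := (aux_le_shift M (-c) (y + c) (M.uenv (x + c) (y + c))).1 h
      have e1 : y + c + -c = y := by abel
      have e2 : M.uenv (x + c) (y + c) + -c = M.uenv (x + c) (y + c) - c := by abel
      rwa [e1, e2] at this
    have h := (aux_le_shift M c (M.uenv x y) (M.uenv (x + c) (y + c) - c)).1
      (M.uenv_min _ _ _ h1 h2)
    have e : M.uenv (x + c) (y + c) - c + c = M.uenv (x + c) (y + c) := by abel
    rwa [e] at h

lemma aux_neg_le {x y : V} (h : M.le x y) : M.le (-y) (-x) := by
  have := (aux_le_shift M (-x - y) x y).1 h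
  have e1 : x + (-x - y) = -y := by abel
  have e2 : y + (-x - y) = -x := by abel
  rwa [e1, e2] at this

lemma aux_neg_sle {x y : V} (h : M.sle x y) : M.sle (-y) (-x) := by
  have := (aux_sle_shift M (-x - y) x y).1 h
  have e1 : x + (-x - y) = -y := by abel
  have e2 : y + (-x - y) = -x := by abel
  rwa [e1, e2] at this

lemma aux_lenv_eq (x y : V) : M.lenv x y = -(M.uenv (-x) (-y)) := by
  apply M.le_antisymm
  · have h := M.uenv_min (-x) (-y) (-(M.lenv x y))
      (aux_neg_sle M (M.lenv_sle x y)) (aux_neg_le M (M.lenv_le x y))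
    have := aux_neg_le M h
    simpa using this
  · exact M.lenv_max _ _ _
      (by simpa using aux_neg_sle M (M.uenv_sle (-x) (-y)))
      (by simpa using aux_neg_le M (M.uenv_le (-x) (-y)))

lemma aux_uenv_formula (x y : V) : M.uenv x y = M.uenv 0 (y - x) + x := by
  have h := aux_uenv_add M x 0 (y - x)
  have e1 : (0 : V) + x = x := by abel
  have e2 : y - x + x = y := by abel
  rwa [e1, e2] at h

lemma aux_lenv_formula (x y : V) : M.lenv x y = x - M.uenv 0 (x - y) := by
  rw [aux_lenv_eq]
  have h := aux_uenv_add M (-x) 0 (x - y)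
  have e1 : (0 : V) + -x = -x := by abel
  have e2 : x - y + -x = -y := by abel
  rw [e1, e2] at h
  rw [h]; abel

/-- Dominated decomposition. -/
lemma aux_domdec (hqr : M.QuasiRegular) {u v1 v2 : V}
    (hu : M.sle 0 u) (huv : M.le u (v1 + v2))
    (hv1 : M.sle 0 v1) (hv2 : M.sle 0 v2) :
    ∃ u1 u2, u = u1 + u2 ∧ M.sle 0 u1 ∧ M.le u1 v1 ∧ M.sle 0 u2 ∧ M.le u2 v2 := by
  refine ⟨M.uenv 0 (u - v2), u - M.uenv 0 (u - v2), by abel, M.uenv_sle 0 _, ?_, ?_, ?_⟩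
  · apply M.uenv_min _ _ _ hv1
    have := (aux_le_shift M (-v2) u (v1 + v2)).1 huv
    have e1 : u + -v2 = u - v2 := by abel
    have e2 : v1 + v2 + -v2 = v1 := by abel
    rwa [e1, e2] at this
  · -- sle 0 (u - uenv 0 (u - v2)) ↔ sle (uenv 0 (u-v2)) u
    have h : M.sle (M.uenv 0 (u - v2)) u := by
      apply hqr.1 0 (u - v2) u hu
      have := (aux_sle_shift M (u - v2) 0 v2).1 hv2
      have e1 : (0 : V) + (u - v2) = u - v2 := by abel
      have e2 : v2 + (u - v2) = u := by abel
      rwa [e1, e2] at this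
    have := (aux_sle_shift M (-(M.uenv 0 (u - v2))) _ _).1 h
    have e1 : M.uenv 0 (u - v2) + -(M.uenv 0 (u - v2)) = 0 := by abel
    have e2 : u + -(M.uenv 0 (u - v2)) = u - M.uenv 0 (u - v2) := by abel
    rwa [e1, e2] at this
  · have h := M.uenv_le 0 (u - v2)
    have := (aux_le_shift M (v2 - M.uenv 0 (u - v2)) _ _).1 h
    have e1 : u - v2 + (v2 - M.uenv 0 (u - v2)) = u - M.uenv 0 (u - v2) := by abel
    have e2 : M.uenv 0 (u - v2) + (v2 - M.uenv 0 (u - v2)) = v2 := by abel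
    rwa [e1, e2] at this

end Aux

lemma aux_key {V : Type*} [AddCommGroup V] [Module ℝ V] (M : MLS V)
    (hqr : M.QuasiRegular) {A B : Set V}
    (hA : M.IsQuasiIdeal A) (hB : M.IsQuasiIdeal B) {x a b : V}
    (ha : a ∈ A) (hb : b ∈ B) (hx : M.sle 0 x) (hle : M.le x (a + b)) :
    ∃ u ∈ M.sp A, ∃ v ∈ M.sp B, x = u + v := by
  set vA := M.uenv 0 a with hvA
  set vB := M.uenv 0 b with hvB
  have hvAA : vA ∈ A := (hA.1.2 0 hA.1.1.1 a ha).1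
  have hvBB : vB ∈ B := (hB.1.2 0 hB.1.1.1 b hb).1
  have hvAs : M.sle 0 vA := M.uenv_sle 0 a
  have hvBs : M.sle 0 vB := M.uenv_sle 0 b
  have hxv : M.le x (vA + vB) :=
    M.le_trans _ _ _ hle (aux_add_le M (M.uenv_le 0 a) (M.uenv_le 0 b))
  obtain ⟨u1, u2, heq, hs1, hl1, hs2, hl2⟩ := aux_domdec M hqr hx hxv hvAs hvBs
  exact ⟨u1, ⟨hA.2 vA u1 hs1 hl1 hvAA, hs1⟩, u2, ⟨hB.2 vB u2 hs2 hl2 hvBB, hs2⟩, heq⟩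


/-- For quasi-ideals `A`, `B` one has `(A + B)_sp = A_sp + B_sp`; and if `A`
and `B` are regular then `A + B` is a regular quasi-ideal. -/
theorem stmt10 {V : Type*} [AddCommGroup V] [Module ℝ V] (M : MLS V)
    (hqr : M.QuasiRegular) (A B : Set V)
    (hA : M.IsQuasiIdeal A) (hB : M.IsQuasiIdeal B) :
    M.sp (M.sumS A B) = M.sumS (M.sp A) (M.sp B) ∧
    (M.Regular A → M.Regular B →
      M.IsQuasiIdeal (M.sumS A B) ∧ M.Regular (M.sumS A B)) := by
  -- uenv 0 z stays in the sum
  have key0 : ∀ z ∈ M.sumS A B, ∃ u ∈ M.sp A, ∃ v ∈ M.sp B, M.uenv 0 z = u + v := by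
    rintro z ⟨a, ha, b, hb, rfl⟩
    have hvAA : M.uenv 0 a ∈ A := (hA.1.2 0 hA.1.1.1 a ha).1
    have hvBB : M.uenv 0 b ∈ B := (hB.1.2 0 hB.1.1.1 b hb).1
    have hle : M.le (M.uenv 0 (a + b)) (M.uenv 0 a + M.uenv 0 b) := by
      apply M.uenv_min
      · have := aux_add_sle M (M.uenv_sle 0 a) (M.uenv_sle 0 b)
        rwa [add_zero] at this
      · exact aux_add_le M (M.uenv_le 0 a) (M.uenv_le 0 b)
    exact aux_key M hqr hA hB hvAA hvBB (M.uenv_sle 0 (a + b)) hle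
  have hsub : M.IsSubspace (M.sumS A B) := by
    refine ⟨⟨0, hA.1.1.1, 0, hB.1.1.1, (add_zero 0).symm⟩, ?_, ?_⟩
    · rintro x ⟨a, ha, b, hb, rfl⟩ y ⟨a', ha', b', hb', rfl⟩
      exact ⟨a + a', hA.1.1.2.1 a ha a' ha', b + b', hB.1.1.2.1 b hb b' hb', by abel⟩
    · rintro c x ⟨a, ha, b, hb, rfl⟩
      exact ⟨c • a, hA.1.1.2.2 c a ha, c • b, hB.1.1.2.2 c b hb, smul_add c a b⟩
  have hsum_mem : ∀ a ∈ A, ∀ b ∈ B, a + b ∈ M.sumS A B := by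
    intro a ha b hb; exact ⟨a, ha, b, hb, rfl⟩
  have huenv0 : ∀ z ∈ M.sumS A B, M.uenv 0 z ∈ M.sumS A B := by
    intro z hz
    obtain ⟨u, ⟨huA, _⟩, v, ⟨hvB, _⟩, heq⟩ := key0 z hz
    rw [heq]; exact hsum_mem u huA v hvB
  have hsubm : ∀ x ∈ M.sumS A B, ∀ y ∈ M.sumS A B, x - y ∈ M.sumS A B := by
    intro x hx y hy
    have hy' : (-1 : ℝ) • y ∈ M.sumS A B := hsub.2.2 (-1) y hy
    have := hsub.2.1 x hx _ hy'
    have e : x + (-1 : ℝ) • y = x - y := by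
      rw [neg_one_smul]; abel
    rwa [e] at this
  have hml : M.IsMLSubspace (M.sumS A B) := by
    refine ⟨hsub, ?_⟩
    intro x hx y hy
    constructor
    · rw [aux_uenv_formula M x y]
      have h1 : M.uenv 0 (y - x) ∈ M.sumS A B := huenv0 _ (hsubm y hy x hx)
      have := hsubm _ h1 _ (hsubm _ hsub.1 x hx)
      have e : M.uenv 0 (y - x) - (0 - x) = M.uenv 0 (y - x) + x := by abel
      rwa [e] at this
    · rw [aux_lenv_formula M x y]
      exact hsubm x hx _ (huenv0 _ (hsubm x hx y hy))
  have hconv : ∀ x y, M.sle 0 y → M.le y x → x ∈ M.sumS A B → y ∈ M.sumS A B := by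
    rintro x y hy hyx ⟨a, ha, b, hb, rfl⟩
    obtain ⟨u, ⟨huA, _⟩, v, ⟨hvB, _⟩, heq⟩ := aux_key M hqr hA hB ha hb hy hyx
    rw [heq]; exact hsum_mem u huA v hvB
  constructor
  · apply Set.Subset.antisymm
    · rintro x ⟨⟨a, ha, b, hb, rfl⟩, hpos⟩
      obtain ⟨u, hu, v, hv, heq⟩ :=
        aux_key M hqr hA hB ha hb hpos (M.le_refl (a + b))
      exact ⟨u, hu, v, hv, heq⟩
    · rintro x ⟨u, ⟨huA, hus⟩, v, ⟨hvB, hvs⟩, rfl⟩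
      refine ⟨hsum_mem u huA v hvB, ?_⟩
      have := aux_add_sle M hus hvs
      rwa [add_zero] at this
  · intro hRA hRB
    refine ⟨⟨hml, hconv⟩, ?_⟩
    rintro x ⟨a, ha, b, hb, rfl⟩
    obtain ⟨uA, ⟨huA, husA⟩, vA, ⟨hvA, hvsA⟩, heqA⟩ := hRA a ha
    obtain ⟨uB, ⟨huB, husB⟩, vB, ⟨hvB, hvsB⟩, heqB⟩ := hRB b hb
    refine ⟨uA + uB, ⟨hsum_mem uA huA uB huB, ?_⟩,
      vA + vB, ⟨hsum_mem vA hvA vB hvB, ?_⟩, ?_⟩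
    · have := aux_add_sle M husA husB; rwa [add_zero] at this
    · have := aux_add_sle M hvsA hvsB; rwa [add_zero] at this
    · rw [heqA, heqB]; abel
end

section
/- Let V be a quasi-regular mixed lattice vector space and let R(V) be the collection of all regular quasi-ideals of V ordered by inclusion. Then R(V) is a distributive lattice with A ∨ B = A + B and A ∧ B = A ∩ B, with smallest element {0} and largest element V_sp − V_sp. -/
/-- `S` is a regular quasi-ideal. -/
def MLS.RQI {V : Type*} [AddCommGroup V] [Module ℝ V] (M : MLS V)
    (S : Set V) : Prop :=
  M.IsQuasiIdeal S ∧ M.Regular S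

namespace MLSAux

variable {V : Type*} [AddCommGroup V] [Module ℝ V] {M : MLS V}

lemma le_shift (z : V) {x y : V} (h : M.le x y) : M.le (x + z) (y + z) := by
  simpa [add_comm] using M.add_le_left z h

lemma sle_shift (z : V) {x y : V} (h : M.sle x y) : M.sle (x + z) (y + z) := by
  simpa [add_comm] using M.add_sle_left z h

lemma le_of_sub {x y : V} (h : M.le 0 (y - x)) : M.le x y := by
  simpa using le_shift x h

lemma sub_of_le {x y : V} (h : M.le x y) : M.le 0 (y - x) := by
  simpa [sub_eq_add_neg, add_comm] using le_shift (-x) h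

lemma sle_of_sub {x y : V} (h : M.sle 0 (y - x)) : M.sle x y := by
  simpa using sle_shift x h

lemma sub_of_sle {x y : V} (h : M.sle x y) : M.sle 0 (y - x) := by
  simpa [sub_eq_add_neg, add_comm] using sle_shift (-x) h

/-- Transfer a `le` fact along an `abel`-style identity of differences. -/
lemma le_of_ab {a b c d : V} (h : M.le a b) (e : b - a = d - c) : M.le c d :=
  le_of_sub (by rw [← e]; exact sub_of_le h)

lemma sle_of_ab {a b c d : V} (h : M.sle a b) (e : b - a = d - c) : M.sle c d :=
  sle_of_sub (by rw [← e]; exact sub_of_sle h)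

/-- The key consequence of quasi-regularity: the specific order implies the
initial order. -/
lemma sle_le (hqr : M.QuasiRegular) {x y : V} (h : M.sle x y) : M.le x y := by
  have h0 : M.sle 0 (y - x) := sub_of_sle h
  have h1 : M.sle (M.uenv (y - x) 0) (y - x) := hqr.1 (y - x) 0 (y - x) (M.sle_refl _) h0
  have h3 : M.uenv (y - x) 0 = y - x := M.sle_antisymm _ _ h1 (M.uenv_sle (y - x) 0)
  have h4 := M.uenv_le (y - x) 0
  rw [h3] at h4
  exact le_of_sub h4

lemma sle_add {a b : V} (h1 : M.sle 0 a) (h2 : M.sle 0 b) : M.sle 0 (a + b) :=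
  M.sle_trans _ _ _ h1 (by simpa using M.add_sle_left a h2)

lemma le_add {a b : V} (h1 : M.le 0 a) (h2 : M.le 0 b) : M.le 0 (a + b) :=
  M.le_trans _ _ _ h1 (by simpa using M.add_le_left a h2)

lemma uenv_tr (z x y : V) : M.uenv (z + x) (z + y) = z + M.uenv x y := by
  apply M.le_antisymm
  · exact M.uenv_min _ _ _ (M.add_sle_left z (M.uenv_sle x y)) (M.add_le_left z (M.uenv_le x y))
  · have a1 : M.sle x (-z + M.uenv (z + x) (z + y)) := by
      simpa using M.add_sle_left (-z) (M.uenv_sle (z + x) (z + y))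
    have a2 : M.le y (-z + M.uenv (z + x) (z + y)) := by
      simpa using M.add_le_left (-z) (M.uenv_le (z + x) (z + y))
    have h := M.add_le_left z (M.uenv_min _ _ _ a1 a2)
    simpa using h

lemma lenv_eq (x y : V) : M.lenv x y = x + y - M.uenv y x := by
  apply M.le_antisymm
  · have b1 : M.sle y (x + y - M.lenv x y) :=
      sle_of_ab (M.lenv_sle x y) (by abel)
    have b2 : M.le x (x + y - M.lenv x y) :=
      le_of_ab (M.lenv_le x y) (by abel)
    exact le_of_ab (M.uenv_min y x _ b1 b2) (by abel)
  · refine M.lenv_max x y _ ?_ ?_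
    · exact sle_of_ab (M.uenv_sle y x) (by abel)
    · exact le_of_ab (M.uenv_le y x) (by abel)

lemma lenv_tr (z x y : V) : M.lenv (z + x) (z + y) = z + M.lenv x y := by
  rw [lenv_eq, lenv_eq, uenv_tr]; abel

/-- Riesz-type decomposition in a quasi-regular mixed lattice vector space. -/
lemma riesz (hqr : M.QuasiRegular) {a b z : V} (ha : M.sle 0 a) (hb : M.sle 0 b)
    (hz : M.sle 0 z) (hzab : M.le z (a + b)) :
    ∃ u v, z = u + v ∧ M.sle 0 u ∧ M.le u a ∧ M.sle 0 v ∧ M.le v b := by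
  refine ⟨z + a - M.uenv a z, M.uenv a z - a, by abel, ?_, ?_, ?_, ?_⟩
  · have h1 : M.sle a (z + a) := sle_of_ab hz (by abel)
    have h2 : M.sle z (z + a) := sle_of_ab ha (by abel)
    exact sub_of_sle (hqr.1 a z (z + a) h1 h2)
  · exact le_of_ab (M.uenv_le a z) (by abel)
  · exact sub_of_sle (M.uenv_sle a z)
  · have h3 : M.sle a (a + b) := sle_of_ab hb (by abel)
    exact le_of_ab (M.uenv_min a z (a + b) h3 hzab) (by abel)

end MLSAux

namespace MLSAux

variable {V : Type*} [AddCommGroup V] [Module ℝ V] {M : MLS V}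

lemma sub_mem {S : Set V} (hS : M.IsSubspace S) {x y : V} (hx : x ∈ S) (hy : y ∈ S) :
    x - y ∈ S := by
  have h1 : (-1 : ℝ) • y ∈ S := hS.2.2 (-1) y hy
  have h2 := hS.2.1 x hx _ h1
  have e : x - y = x + (-1 : ℝ) • y := by rw [neg_one_smul]; abel
  rw [e]; exact h2

/-- If `S` is a mixed-order convex subspace generated by its specifically
positive elements, then `S` is a regular quasi-ideal. -/
lemma mkRQI (hqr : M.QuasiRegular) {S : Set V} (hsub : M.IsSubspace S)
    (hconv : ∀ x y, M.sle 0 y → M.le y x → x ∈ S → y ∈ S)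
    (hreg : ∀ x ∈ S, ∃ u ∈ M.sp S, ∃ v ∈ M.sp S, x = u - v) : M.RQI S := by
  have key : ∀ x ∈ S, ∀ y ∈ S, M.uenv x y ∈ S := by
    intro x hx y hy
    obtain ⟨u₁, ⟨hu₁S, hu₁p⟩, v₁, ⟨hv₁S, hv₁p⟩, hx'⟩ := hreg x hx
    obtain ⟨u₂, ⟨hu₂S, hu₂p⟩, v₂, ⟨hv₂S, hv₂p⟩, hy'⟩ := hreg y hy
    have hvv : v₁ + v₂ ∈ S := hsub.2.1 v₁ hv₁S v₂ hv₂S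
    have hp_eq : v₁ + v₂ + x = u₁ + v₂ := by rw [hx']; abel
    have hq_eq : v₁ + v₂ + y = u₂ + v₁ := by rw [hy']; abel
    have hpS : v₁ + v₂ + x ∈ S := by rw [hp_eq]; exact hsub.2.1 u₁ hu₁S v₂ hv₂S
    have hqS : v₁ + v₂ + y ∈ S := by rw [hq_eq]; exact hsub.2.1 u₂ hu₂S v₁ hv₁S
    have hpp : M.sle 0 (v₁ + v₂ + x) := by rw [hp_eq]; exact sle_add hu₁p hv₂p
    have hqp : M.sle 0 (v₁ + v₂ + y) := by rw [hq_eq]; exact sle_add hu₂p hv₁p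
    have hUle : M.le (M.uenv (v₁ + v₂ + x) (v₁ + v₂ + y)) ((v₁ + v₂ + x) + (v₁ + v₂ + y)) :=
      M.uenv_min _ _ _ (sle_of_ab hqp (by abel)) (le_of_ab (sle_le hqr hpp) (by abel))
    have hUp : M.sle 0 (M.uenv (v₁ + v₂ + x) (v₁ + v₂ + y)) :=
      M.sle_trans _ _ _ hpp (M.uenv_sle _ _)
    have hU : M.uenv (v₁ + v₂ + x) (v₁ + v₂ + y) ∈ S :=
      hconv _ _ hUp hUle (hsub.2.1 _ hpS _ hqS)
    have htr := uenv_tr (M := M) (v₁ + v₂) x y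
    have : M.uenv x y = M.uenv (v₁ + v₂ + x) (v₁ + v₂ + y) - (v₁ + v₂) := by
      rw [htr]; abel
    rw [this]; exact sub_mem hsub hU hvv
  refine ⟨⟨⟨hsub, fun x hx y hy => ⟨key x hx y hy, ?_⟩⟩, hconv⟩, hreg⟩
  rw [lenv_eq]
  exact sub_mem hsub (hsub.2.1 x hx y hy) (key y hy x hx)

lemma sumRQI (hqr : M.QuasiRegular) {A B : Set V} (hA : M.RQI A) (hB : M.RQI B) :
    M.RQI (M.sumS A B) := by
  obtain ⟨⟨⟨hAsub, hAenv⟩, hAconv⟩, hAreg⟩ := hA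
  obtain ⟨⟨⟨hBsub, hBenv⟩, hBconv⟩, hBreg⟩ := hB
  have hsub : M.IsSubspace (M.sumS A B) := by
    refine ⟨⟨0, hAsub.1, 0, hBsub.1, by simp⟩, ?_, ?_⟩
    · rintro x ⟨a, ha, b, hb, hx⟩ y ⟨a', ha', b', hb', hy⟩
      exact ⟨a + a', hAsub.2.1 a ha a' ha', b + b', hBsub.2.1 b hb b' hb',
        by rw [hx, hy]; abel⟩
    · rintro c x ⟨a, ha, b, hb, hx⟩
      exact ⟨c • a, hAsub.2.2 c a ha, c • b, hBsub.2.2 c b hb, by rw [hx, smul_add]⟩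
  refine mkRQI hqr hsub ?_ ?_
  · -- mixed-order convexity
    rintro x z hz hzx ⟨a, ha, b, hb, hx⟩
    obtain ⟨a₁, ⟨ha₁, ha₁p⟩, a₂, ⟨ha₂, ha₂p⟩, hae⟩ := hAreg a ha
    obtain ⟨b₁, ⟨hb₁, hb₁p⟩, b₂, ⟨hb₂, hb₂p⟩, hbe⟩ := hBreg b hb
    have hwp : M.sle 0 (z + (a₂ + b₂)) := sle_add hz (sle_add ha₂p hb₂p)
    have hwle : M.le (z + (a₂ + b₂)) (a₁ + b₁) := by
      have h1 : M.le (z + (a₂ + b₂)) (x + (a₂ + b₂)) := le_shift _ hzx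
      have h2 : x + (a₂ + b₂) = a₁ + b₁ := by rw [hx, hae, hbe]; abel
      rwa [h2] at h1
    obtain ⟨u, v, huv, hup, hua, hvp, hvb⟩ := riesz hqr ha₁p hb₁p hwp hwle
    have huA : u ∈ A := hAconv a₁ u hup hua ha₁
    have hvB : v ∈ B := hBconv b₁ v hvp hvb hb₁
    refine ⟨u - a₂, sub_mem hAsub huA ha₂, v - b₂, sub_mem hBsub hvB hb₂, ?_⟩
    have : z = (u + v) - (a₂ + b₂) := by rw [← huv]; abel
    rw [this]; abel
  · -- regularity
    rintro x ⟨a, ha, b, hb, hx⟩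
    obtain ⟨a₁, ⟨ha₁, ha₁p⟩, a₂, ⟨ha₂, ha₂p⟩, hae⟩ := hAreg a ha
    obtain ⟨b₁, ⟨hb₁, hb₁p⟩, b₂, ⟨hb₂, hb₂p⟩, hbe⟩ := hBreg b hb
    refine ⟨a₁ + b₁, ⟨⟨a₁, ha₁, b₁, hb₁, rfl⟩, sle_add ha₁p hb₁p⟩,
      a₂ + b₂, ⟨⟨a₂, ha₂, b₂, hb₂, rfl⟩, sle_add ha₂p hb₂p⟩, ?_⟩
    rw [hx, hae, hbe]; abel

lemma interRQI (hqr : M.QuasiRegular) {A B : Set V} (hA : M.RQI A) (hB : M.RQI B) :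
    M.RQI (A ∩ B) := by
  obtain ⟨⟨⟨hAsub, hAenv⟩, hAconv⟩, hAreg⟩ := hA
  obtain ⟨⟨⟨hBsub, hBenv⟩, hBconv⟩, hBreg⟩ := hB
  have hsub : M.IsSubspace (A ∩ B) := by
    refine ⟨⟨hAsub.1, hBsub.1⟩, ?_, ?_⟩
    · rintro x ⟨hxA, hxB⟩ y ⟨hyA, hyB⟩
      exact ⟨hAsub.2.1 x hxA y hyA, hBsub.2.1 x hxB y hyB⟩
    · rintro c x ⟨hxA, hxB⟩
      exact ⟨hAsub.2.2 c x hxA, hBsub.2.2 c x hxB⟩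
  refine ⟨⟨⟨hsub, ?_⟩, ?_⟩, ?_⟩
  · rintro x ⟨hxA, hxB⟩ y ⟨hyA, hyB⟩
    exact ⟨⟨(hAenv x hxA y hyA).1, (hBenv x hxB y hyB).1⟩,
      ⟨(hAenv x hxA y hyA).2, (hBenv x hxB y hyB).2⟩⟩
  · rintro x y hy0 hyx ⟨hxA, hxB⟩
    exact ⟨hAconv x y hy0 hyx hxA, hBconv x y hy0 hyx hxB⟩
  · rintro x ⟨hxA, hxB⟩
    obtain ⟨a₁, ⟨ha₁, ha₁p⟩, a₂, ⟨ha₂, ha₂p⟩, hae⟩ := hAreg x hxA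
    obtain ⟨b₁, ⟨hb₁, hb₁p⟩, b₂, ⟨hb₂, hb₂p⟩, hbe⟩ := hBreg x hxB
    have hup : M.sle 0 (M.lenv a₁ b₁) := hqr.2 a₁ b₁ 0 ha₁p hb₁p
    have huA : M.lenv a₁ b₁ ∈ A := hAconv a₁ _ hup (sle_le hqr (M.lenv_sle a₁ b₁)) ha₁
    have huB : M.lenv a₁ b₁ ∈ B := hBconv b₁ _ hup (M.lenv_le a₁ b₁) hb₁
    have huAB : M.lenv a₁ b₁ ∈ A ∩ B := ⟨huA, huB⟩
    have hvAB : M.lenv a₁ b₁ - x ∈ A ∩ B := sub_mem hsub huAB ⟨hxA, hxB⟩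
    have hveq : M.lenv a₁ b₁ - x = M.lenv a₂ b₂ := by
      have h1 := lenv_tr (M := M) (-x) a₁ b₁
      have e1 : -x + a₁ = a₂ := by rw [hae]; abel
      have e2 : -x + b₁ = b₂ := by rw [hbe]; abel
      rw [e1, e2] at h1
      rw [h1]; abel
    have hvp : M.sle 0 (M.lenv a₁ b₁ - x) := by
      rw [hveq]; exact hqr.2 a₂ b₂ 0 ha₂p hb₂p
    exact ⟨M.lenv a₁ b₁, ⟨huAB, hup⟩, M.lenv a₁ b₁ - x, ⟨hvAB, hvp⟩, by abel⟩

end MLSAux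

namespace MLSAux

variable {V : Type*} [AddCommGroup V] [Module ℝ V] {M : MLS V}

lemma distrib (hqr : M.QuasiRegular) {A B C : Set V} (hA : M.RQI A) (hB : M.RQI B)
    (hC : M.RQI C) : A ∩ M.sumS B C = M.sumS (A ∩ B) (A ∩ C) := by
  have hBC := sumRQI hqr hB hC
  have hSum := sumRQI hqr (interRQI hqr hA hB) (interRQI hqr hA hC)
  have hD := interRQI hqr hA hBC
  ext x
  constructor
  · rintro ⟨hxA, hxBC⟩
    obtain ⟨p, ⟨⟨hpA, hpBC⟩, hpp⟩, q, ⟨⟨hqA, hqBC⟩, hqp⟩, hx⟩ := hD.2 x ⟨hxA, hxBC⟩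
    have key : ∀ r, M.sle 0 r → r ∈ A → r ∈ M.sumS B C →
        r ∈ M.sumS (A ∩ B) (A ∩ C) := by
      rintro r hr hrA ⟨b, hb, c, hc, hre⟩
      obtain ⟨b₁, ⟨hb₁, hb₁p⟩, b₂, ⟨hb₂, hb₂p⟩, hbe⟩ := hB.2 b hb
      obtain ⟨c₁, ⟨hc₁, hc₁p⟩, c₂, ⟨hc₂, hc₂p⟩, hce⟩ := hC.2 c hc
      have hrle : M.le r (b₁ + c₁) :=
        le_of_ab (le_add (sle_le hqr hb₂p) (sle_le hqr hc₂p))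
          (by rw [hre, hbe, hce]; abel)
      obtain ⟨u, v, hruv, hup, hub, hvp, hvc⟩ := riesz hqr hb₁p hc₁p hr hrle
      have huB : u ∈ B := hB.1.2 b₁ u hup hub hb₁
      have hvC : v ∈ C := hC.1.2 c₁ v hvp hvc hc₁
      have huA : u ∈ A :=
        hA.1.2 r u hup (le_of_ab (sle_le hqr hvp) (by rw [hruv]; abel)) hrA
      have hvA : v ∈ A :=
        hA.1.2 r v hvp (le_of_ab (sle_le hqr hup) (by rw [hruv]; abel)) hrA
      exact ⟨u, ⟨huA, huB⟩, v, ⟨hvA, hvC⟩, hruv⟩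
    have hp' := key p hpp hpA hpBC
    have hq' := key q hqp hqA hqBC
    rw [hx]
    exact sub_mem hSum.1.1.1 hp' hq'
  · rintro ⟨u, ⟨huA, huB⟩, v, ⟨hvA, hvC⟩, hx⟩
    refine ⟨?_, ⟨u, huB, v, hvC, hx⟩⟩
    rw [hx]; exact hA.1.1.1.2.1 u huA v hvA

end MLSAux


open MLSAux

/-- The regular quasi-ideals of a quasi-regular mixed lattice vector space,
ordered by inclusion, form a distributive lattice with `A ∨ B = A + B`,
`A ∧ B = A ∩ B`, smallest element `{0}` and largest element `V_sp − V_sp`. -/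
theorem stmt11 {V : Type*} [AddCommGroup V] [Module ℝ V] (M : MLS V)
    (hqr : M.QuasiRegular) :
    (∀ A B, M.RQI A → M.RQI B → M.RQI (M.sumS A B) ∧ M.RQI (A ∩ B)) ∧
    (∀ A B, M.RQI A → M.RQI B → A ⊆ M.sumS A B ∧ B ⊆ M.sumS A B ∧
      ∀ C, M.RQI C → A ⊆ C → B ⊆ C → M.sumS A B ⊆ C) ∧
    (∀ A B, M.RQI A → M.RQI B → A ∩ B ⊆ A ∧ A ∩ B ⊆ B ∧
      ∀ C, M.RQI C → C ⊆ A → C ⊆ B → C ⊆ A ∩ B) ∧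
    (∀ A B C, M.RQI A → M.RQI B → M.RQI C →
      A ∩ M.sumS B C = M.sumS (A ∩ B) (A ∩ C)) ∧
    (M.RQI {0} ∧ ∀ A, M.RQI A → {(0:V)} ⊆ A) ∧
    (M.RQI {x | ∃ u, ∃ v, M.sle 0 u ∧ M.sle 0 v ∧ x = u - v} ∧
      ∀ A, M.RQI A → A ⊆ {x | ∃ u, ∃ v, M.sle 0 u ∧ M.sle 0 v ∧ x = u - v}) := by
  refine ⟨fun A B hA hB => ⟨sumRQI hqr hA hB, interRQI hqr hA hB⟩, ?_, ?_, ?_, ?_, ?_⟩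
  · intro A B hA hB
    refine ⟨fun a ha => ⟨a, ha, 0, hB.1.1.1.1, by simp⟩,
      fun b hb => ⟨0, hA.1.1.1.1, b, hb, by simp⟩, ?_⟩
    rintro C hC hAC hBC x ⟨a, ha, b, hb, hx⟩
    rw [hx]
    exact hC.1.1.1.2.1 a (hAC ha) b (hBC hb)
  · intro A B _ _
    exact ⟨Set.inter_subset_left, Set.inter_subset_right,
      fun C _ h1 h2 => Set.subset_inter h1 h2⟩
  · intro A B C hA hB hC
    exact distrib hqr hA hB hC
  · constructor
    · refine mkRQI hqr ⟨rfl, ?_, ?_⟩ ?_ ?_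
      · rintro x hx y hy
        rw [Set.mem_singleton_iff] at hx hy ⊢
        rw [hx, hy, add_zero]
      · rintro c x hx
        rw [Set.mem_singleton_iff] at hx ⊢
        rw [hx, smul_zero]
      · rintro x y hy0 hyx hx
        rw [Set.mem_singleton_iff] at hx ⊢
        rw [hx] at hyx
        exact M.le_antisymm y 0 hyx (sle_le hqr hy0)
      · rintro x hx
        rw [Set.mem_singleton_iff] at hx
        exact ⟨0, ⟨rfl, M.sle_refl 0⟩, 0, ⟨rfl, M.sle_refl 0⟩, by rw [hx]; abel⟩
    · intro A hA x hx
      rw [Set.mem_singleton_iff] at hx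
      rw [hx]
      exact hA.1.1.1.1
  · constructor
    · refine mkRQI hqr ⟨⟨0, 0, M.sle_refl 0, M.sle_refl 0, by abel⟩, ?_, ?_⟩ ?_ ?_
      · rintro x ⟨u, v, hu, hv, hx⟩ y ⟨u', v', hu', hv', hy⟩
        exact ⟨u + u', v + v', sle_add hu hu', sle_add hv hv', by rw [hx, hy]; abel⟩
      · rintro c x ⟨u, v, hu, hv, hx⟩
        rcases le_or_gt 0 c with hc | hc
        · refine ⟨c • u, c • v, ?_, ?_, by rw [hx, smul_sub]⟩
          · simpa using M.smul_sle c hc 0 u hu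
          · simpa using M.smul_sle c hc 0 v hv
        · refine ⟨(-c) • v, (-c) • u, ?_, ?_, ?_⟩
          · simpa using M.smul_sle (-c) (by linarith) 0 v hv
          · simpa using M.smul_sle (-c) (by linarith) 0 u hu
          · rw [hx, smul_sub, neg_smul, neg_smul]; abel
      · rintro x y hy0 _ _
        exact ⟨y, 0, hy0, M.sle_refl 0, by abel⟩
      · rintro x ⟨u, v, hu, hv, hx⟩
        exact ⟨u, ⟨⟨u, 0, hu, M.sle_refl 0, by abel⟩, hu⟩,
          v, ⟨⟨v, 0, hv, M.sle_refl 0, by abel⟩, hv⟩, hx⟩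
    · rintro A hA x hx
      obtain ⟨u, ⟨_, hup⟩, v, ⟨_, hvp⟩, hx'⟩ := hA.2 x hx
      exact ⟨u, v, hup, hvp, hx'⟩
end

section
/- Additivity of left-disjointness: in a quasi-regular mixed lattice group, if x, y ≽ 0 and z ≥ 0 with y⌃z = 0, then (x + y)⌃z = x⌃z. In particular, if also x⌃z = 0 then (x+y)⌃z = 0. -/
section Aux

variable {G : Type*} [AddCommGroup G] (M : MLG G)

lemma MLG.le_shift {a b c d : G} (h : M.le a b) (e : a + d = c + b) :
    M.le c d := by
  have := M.add_le_left (c - a) h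
  have h1 : c - a + a = c := by abel
  have h2 : c - a + b = d := by
    have : c + b = a + d := e.symm
    have : c - a + b = c + b - a := by abel
    rw [this, e.symm]; abel
  rwa [h1, h2] at this

lemma MLG.sle_shift {a b c d : G} (h : M.sle a b) (e : a + d = c + b) :
    M.sle c d := by
  have := M.add_sle_left (c - a) h
  have h1 : c - a + a = c := by abel
  have h2 : c - a + b = d := by
    have : c - a + b = c + b - a := by abel
    rw [this, e.symm]; abel
  rwa [h1, h2] at this

end Aux

/-- Additivity of left-disjointness: if `x, y ≽ 0`, `z ≥ 0` and `y⌃z = 0`,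
then `(x+y)⌃z = x⌃z`; in particular if also `x⌃z = 0` then `(x+y)⌃z = 0`. -/
theorem stmt14 {G : Type*} [AddCommGroup G] (M : MLG G) (hqr : M.QuasiRegular)
    (x y z : G) (hx : M.sle 0 x) (hy : M.sle 0 y) (hz : M.le 0 z)
    (hyz : M.lenv y z = 0) :
    M.lenv (x + y) z = M.lenv x z ∧
    (M.lenv x z = 0 → M.lenv (x + y) z = 0) := by
  set u := M.lenv (x + y) z with hu
  set v := M.lenv x z with hv
  have hvx : M.sle v x := M.lenv_sle x z
  have hvz : M.le v z := M.lenv_le x z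
  have huxy : M.sle u (x + y) := M.lenv_sle (x + y) z
  have huz : M.le u z := M.lenv_le (x + y) z
  -- x ≼ x + y
  have hxxy : M.sle x (x + y) := by
    have := M.add_sle_left x hy
    simpa using this
  -- v ≤ u
  have hvu : M.le v u := M.lenv_max (x + y) z v (M.sle_trans _ _ _ hvx hxxy) hvz
  -- 0 ≤ v
  have h0v : M.le 0 v := M.lenv_max x z 0 hx hz
  -- t := u - v
  set t := u - v with ht
  have h0t : M.le 0 t := M.le_shift hvu (by rw [ht]; abel)
  have htz : M.le t z := by
    -- u ≤ z and 0 ≤ v  ⇒ u - v ≤ z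
    have h1 : M.le (u - v) (z - v) := M.le_shift huz (by abel)
    have h2 : M.le (z - v) z := M.le_shift h0v (by abel)
    exact M.le_trans _ _ _ h1 h2
  -- u - x ≼ y
  have h1 : M.sle (u - x) y := M.sle_shift huxy (by abel)
  -- u - x ≼ t  (since v ≼ x)
  have h2 : M.sle (u - x) t := M.sle_shift hvx (by rw [ht]; abel)
  -- lenv y t = 0
  have hyt : M.lenv y t = 0 := by
    apply M.le_antisymm
    · rw [← hyz]
      exact M.lenv_max y z _ (M.lenv_sle y t)
        (M.le_trans _ _ _ (M.lenv_le y t) htz)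
    · exact M.lenv_max y t 0 hy h0t
  -- u - x ≼ 0
  have h3 : M.sle (u - x) 0 := by
    have := hqr.2 y t (u - x) h1 h2
    rwa [hyt] at this
  -- u ≼ x
  have h4 : M.sle u x := M.sle_shift h3 (by abel)
  have huv : M.le u v := M.lenv_max x z u h4 huz
  have heq : u = v := M.le_antisymm _ _ huv hvu
  exact ⟨heq, fun h => heq.trans h⟩
end

section
/- Additivity of right-disjointness: in a quasi-regular mixed lattice group, if z, x ≽ 0 and y ≥ 0 with z⌃y = 0, then z⌃(x + y) = z⌃x. In particular, if also z⌃x = 0 then z⌃(x+y) = 0. -/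
/-- Additivity of right-disjointness: if `z, x ≽ 0`, `y ≥ 0` and `z⌃y = 0`,
then `z⌃(x+y) = z⌃x`; in particular if also `z⌃x = 0` then `z⌃(x+y) = 0`. -/
theorem stmt15 {G : Type*} [AddCommGroup G] (M : MLG G) (hqr : M.QuasiRegular)
    (z x y : G) (hz : M.sle 0 z) (hx : M.sle 0 x) (hy : M.le 0 y)
    (hzy : M.lenv z y = 0) :
    M.lenv z (x + y) = M.lenv z x ∧
    (M.lenv z x = 0 → M.lenv z (x + y) = 0) := by
  have hmain : M.lenv z (x + y) = M.lenv z x := by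
    set v := M.lenv z (x + y) with hv
    -- lenv z x ≤ lenv z (x+y)
    have hxxy : M.le x (x + y) := by
      have := M.add_le_left x hy
      simpa using this
    have h1 : M.le (M.lenv z x) v :=
      M.lenv_max z (x + y) _ (M.lenv_sle z x)
        (M.le_trans _ _ _ (M.lenv_le z x) hxxy)
    -- v - x ≼ v
    have hvx : M.sle (v - x) v := by
      have := M.add_sle_left (v - x) hx
      simpa using this
    have hvz : M.sle (v - x) z := M.sle_trans _ _ _ hvx (M.lenv_sle z (x + y))
    have hvy : M.le (v - x) y := by
      have := M.add_le_left (-x) (M.lenv_le z (x + y))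
      simpa [sub_eq_add_neg, add_comm, add_assoc, add_left_comm] using this
    have h0 : M.le (v - x) 0 := by
      have := M.lenv_max z y _ hvz hvy
      rwa [hzy] at this
    have hvle : M.le v x := by
      have := M.add_le_left x h0
      simpa using this
    have h2 : M.le v (M.lenv z x) := M.lenv_max z x v (M.lenv_sle z (x + y)) hvle
    exact M.le_antisymm _ _ h2 h1
  exact ⟨hmain, fun h => hmain.trans h⟩
end

section
/- A subspace A of a quasi-regular mixed lattice vector space V is an ideal if and only if: whenever s(x) ≤ s(y) and y ∈ A, then x ∈ A. Here s is the symmetric absolute value. -/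
namespace MLS

variable {V : Type*} [AddCommGroup V] [Module ℝ V] (M : MLS V)

lemma add_le_add' {a b c d : V} (h1 : M.le a b) (h2 : M.le c d) :
    M.le (a + c) (b + d) := by
  have h3 : M.le (a + c) (a + d) := M.add_le_left a h2
  have h4 := M.add_le_left d h1
  refine M.le_trans _ _ _ h3 ?_
  simpa [add_comm] using h4

lemma add_sle_add' {a b c d : V} (h1 : M.sle a b) (h2 : M.sle c d) :
    M.sle (a + c) (b + d) := by
  have h3 : M.sle (a + c) (a + d) := M.add_sle_left a h2
  have h4 := M.add_sle_left d h1
  refine M.sle_trans _ _ _ h3 ?_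
  simpa [add_comm] using h4

lemma le_of_sle (hqr : M.QuasiRegular) {x y : V} (h : M.sle x y) : M.le x y := by
  have h0 : ∀ a : V, M.sle 0 a → M.le 0 a := by
    intro a ha
    have h1 : M.sle (M.uenv a 0) a := hqr.1 a 0 a (M.sle_refl a) ha
    have h2 : M.sle a (M.uenv a 0) := M.uenv_sle a 0
    have h3 : M.uenv a 0 = a := M.sle_antisymm _ _ h1 h2
    have h4 := M.uenv_le a 0
    rwa [h3] at h4
  have h1 : M.sle 0 (-x + y) := by
    have := M.add_sle_left (-x) h
    simpa using this
  have h2 := M.add_le_left x (h0 _ h1)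
  simpa using h2

lemma uenv_add (a x y : V) : M.uenv (a + x) (a + y) = a + M.uenv x y := by
  apply M.le_antisymm
  · apply M.uenv_min
    · exact M.add_sle_left a (M.uenv_sle x y)
    · exact M.add_le_left a (M.uenv_le x y)
  · have h : M.le (M.uenv x y) (-a + M.uenv (a + x) (a + y)) := by
      apply M.uenv_min
      · have := M.add_sle_left (-a) (M.uenv_sle (a + x) (a + y))
        simpa using this
      · have := M.add_le_left (-a) (M.uenv_le (a + x) (a + y))
        simpa using this
    have := M.add_le_left a h
    simpa using this

lemma upp_eq (x : V) : M.upp x = x + M.lspec x := by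
  have := M.uenv_add x 0 (-x)
  simpa [upp, lspec] using this

lemma uspec_eq (x : V) : M.uspec x = x + M.lowp x := by
  have := M.uenv_add x (-x) 0
  simpa [uspec, lowp] using this

lemma uenv_eq (x y : V) : M.uenv x y = x + M.uspec (y - x) := by
  have := M.uenv_add x 0 (y - x)
  simpa [uspec] using this

lemma sav_eq (x : V) : M.sav x = M.upp x + M.lowp x := by
  have e1 : M.lspec x = -x + M.upp x := by rw [M.upp_eq x]; abel
  have e2 : M.uspec x = x + M.lowp x := M.uspec_eq x
  show (2:ℝ)⁻¹ • ((M.upp x + M.lspec x) + (M.lowp x + M.uspec x)) = _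
  rw [e1, e2]
  have e3 : (M.upp x + (-x + M.upp x)) + (M.lowp x + (x + M.lowp x))
      = (2:ℝ) • (M.upp x + M.lowp x) := by
    rw [two_smul]; abel
  rw [e3, smul_smul]
  norm_num

lemma sav_eq' (x : V) : M.sav x = M.uspec x + M.lspec x := by
  rw [M.sav_eq x, M.upp_eq x, M.uspec_eq x]; abel

lemma sav_eq_upp (x : V) : M.sav x = M.upp x + M.upp (-x) := M.sav_eq x

lemma sav_neg (x : V) : M.sav (-x) = M.sav x := by
  rw [M.sav_eq_upp, M.sav_eq_upp, neg_neg, add_comm]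

lemma le_zero_upp (x : V) : M.le 0 (M.upp x) := M.uenv_le x 0

lemma sle_zero_uspec (x : V) : M.sle 0 (M.uspec x) := M.uenv_sle 0 x

lemma sle_zero_lspec (x : V) : M.sle 0 (M.lspec x) := M.uenv_sle 0 (-x)

lemma sle_upp (x : V) : M.sle x (M.upp x) := M.uenv_sle x 0

lemma sle_zero_sav (x : V) : M.sle 0 (M.sav x) := by
  rw [M.sav_eq' x]
  have := M.add_sle_add' (M.sle_zero_uspec x) (M.sle_zero_lspec x)
  simpa using this

lemma le_upp_sav (x : V) : M.le (M.upp x) (M.sav x) := by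
  rw [M.sav_eq_upp x]
  have := M.add_le_left (M.upp x) (M.le_zero_upp (-x))
  simpa using this

lemma le_lspec_sav (hqr : M.QuasiRegular) (x : V) : M.le (M.lspec x) (M.sav x) := by
  rw [M.sav_eq' x]
  have := M.add_le_add' (M.le_of_sle hqr (M.sle_zero_uspec x)) (M.le_refl (M.lspec x))
  simpa using this

lemma sav_of_sle_zero (hqr : M.QuasiRegular) {a : V} (h : M.sle 0 a) : M.sav a = a := by
  have hle : M.le 0 a := M.le_of_sle hqr h
  have hupp : M.upp a = a := by
    apply M.le_antisymm
    · exact M.uenv_min a 0 a (M.sle_refl a) hle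
    · rw [M.upp_eq a]
      have := M.add_le_left a (M.le_of_sle hqr (M.sle_zero_lspec a))
      simpa using this
  have hlow : M.upp (-a) = 0 := by
    apply M.le_antisymm
    · apply M.uenv_min
      · have := M.add_sle_left (-a) h
        simpa using this
      · exact M.le_refl 0
    · exact M.le_zero_upp (-a)
  rw [M.sav_eq_upp a, hupp, hlow, add_zero]

lemma sav_sav (hqr : M.QuasiRegular) (x : V) : M.sav (M.sav x) = M.sav x :=
  M.sav_of_sle_zero hqr (M.sle_zero_sav x)

lemma sav_of_le_zero (hqr : M.QuasiRegular) {a : V} (h : M.le 0 a) :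
    M.sav a = M.uspec a := by
  have hlspec : M.lspec a = 0 := by
    apply M.le_antisymm
    · apply M.uenv_min
      · exact M.sle_refl 0
      · have := M.add_le_left (-a) h
        simpa using this
    · exact M.le_of_sle hqr (M.sle_zero_lspec a)
  rw [M.sav_eq' a, hlspec, add_zero]

lemma sav_mono (hqr : M.QuasiRegular) {x y : V} (h0 : M.le 0 y) (h : M.le y x) :
    M.le (M.sav y) (M.sav x) := by
  have h0x : M.le 0 x := M.le_trans _ _ _ h0 h
  rw [M.sav_of_le_zero hqr h0, M.sav_of_le_zero hqr h0x]
  apply M.uenv_min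
  · exact M.sle_zero_uspec x
  · exact M.le_trans _ _ _ h (M.uenv_le 0 x)

lemma upp_subadd (x y : V) : M.le (M.upp (x + y)) (M.upp x + M.upp y) := by
  apply M.uenv_min
  · exact M.add_sle_add' (M.sle_upp x) (M.sle_upp y)
  · have := M.add_le_add' (M.le_zero_upp x) (M.le_zero_upp y)
    simpa using this

lemma sav_subadd (x y : V) : M.le (M.sav (x + y)) (M.sav x + M.sav y) := by
  rw [M.sav_eq_upp (x + y), M.sav_eq_upp x, M.sav_eq_upp y, neg_add]
  have h := M.add_le_add' (M.upp_subadd x y) (M.upp_subadd (-x) (-y))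
  have e : M.upp x + M.upp y + (M.upp (-x) + M.upp (-y))
      = M.upp x + M.upp (-x) + (M.upp y + M.upp (-y)) := by abel
  rw [← e]
  exact h

lemma uspec_le_sav (hqr : M.QuasiRegular) (c : V) : M.le (M.uspec c) (M.sav c) := by
  rw [M.sav_eq' c]
  have := M.add_le_left (M.uspec c) (M.le_of_sle hqr (M.sle_zero_lspec c))
  simpa using this

lemma sav_sub_le (x y : V) : M.le (M.sav (x - y)) (M.sav x + M.sav y) := by
  have := M.sav_subadd x (-y)
  rw [M.sav_neg y] at this
  simpa [sub_eq_add_neg] using this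

lemma sav_uenv (hqr : M.QuasiRegular) (x y : V) :
    M.le (M.sav (M.uenv x y)) (M.sav x + (M.sav y + M.sav x)) := by
  rw [M.uenv_eq x y]
  have h1 := M.sav_subadd x (M.uspec (y - x))
  have h2 : M.sav (M.uspec (y - x)) = M.uspec (y - x) :=
    M.sav_of_sle_zero hqr (M.sle_zero_uspec _)
  have h3 := M.uspec_le_sav hqr (y - x)
  have h4 := M.sav_sub_le y x
  refine M.le_trans _ _ _ h1 ?_
  rw [h2]
  exact M.add_le_add' (M.le_refl _) (M.le_trans _ _ _ h3 h4)

lemma lenv_eq_aux (x y : V) : M.lenv x y = x + y - M.uenv y x := by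
  apply M.le_antisymm
  · have h : M.le (M.uenv y x) (x + y - M.lenv x y) := by
      apply M.uenv_min
      · have h2 := M.add_sle_left (y - M.lenv x y) (M.lenv_sle x y)
        have e1 : y - M.lenv x y + M.lenv x y = y := by abel
        have e2 : y - M.lenv x y + x = x + y - M.lenv x y := by abel
        rw [e1, e2] at h2; exact h2
      · have h2 := M.add_le_left (x - M.lenv x y) (M.lenv_le x y)
        have e1 : x - M.lenv x y + M.lenv x y = x := by abel
        have e2 : x - M.lenv x y + y = x + y - M.lenv x y := by abel
        rw [e1, e2] at h2; exact h2
    have h2 := M.add_le_left (M.lenv x y - M.uenv y x) h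
    have e1 : M.lenv x y - M.uenv y x + M.uenv y x = M.lenv x y := by abel
    have e2 : M.lenv x y - M.uenv y x + (x + y - M.lenv x y) = x + y - M.uenv y x := by abel
    rw [e1, e2] at h2; exact h2
  · apply M.lenv_max
    · have h1 := M.add_sle_left (x - M.uenv y x) (M.uenv_sle y x)
      have e1 : x - M.uenv y x + y = x + y - M.uenv y x := by abel
      have e2 : x - M.uenv y x + M.uenv y x = x := by abel
      rw [e1, e2] at h1; exact h1
    · have h1 := M.add_le_left (y - M.uenv y x) (M.uenv_le y x)
      have e1 : y - M.uenv y x + x = x + y - M.uenv y x := by abel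
      have e2 : y - M.uenv y x + M.uenv y x = y := by abel
      rw [e1, e2] at h1; exact h1

lemma lenv_eq (x y : V) : M.lenv x y = x + -M.uspec (x - y) := by
  rw [M.lenv_eq_aux x y, M.uenv_eq y x]
  abel

lemma sav_lenv (hqr : M.QuasiRegular) (x y : V) :
    M.le (M.sav (M.lenv x y)) (M.sav x + (M.sav x + M.sav y)) := by
  rw [M.lenv_eq x y]
  have h1 := M.sav_subadd x (-M.uspec (x - y))
  have h2 : M.sav (-M.uspec (x - y)) = M.uspec (x - y) := by
    rw [M.sav_neg]
    exact M.sav_of_sle_zero hqr (M.sle_zero_uspec _)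
  have h3 := M.uspec_le_sav hqr (x - y)
  have h4 := M.sav_sub_le x y
  refine M.le_trans _ _ _ h1 ?_
  rw [h2]
  exact M.add_le_add' (M.le_refl _) (M.le_trans _ _ _ h3 h4)

end MLS


/-- A subspace `A` is an ideal if and only if `s(x) ≤ s(y)` and `y ∈ A`
imply `x ∈ A`, where `s` is the symmetric absolute value. -/
theorem stmt17 {V : Type*} [AddCommGroup V] [Module ℝ V] (M : MLS V)
    (hqr : M.QuasiRegular) (A : Set V) (hA : M.IsSubspace A) :
    M.IsIdeal A ↔ ∀ x y, M.le (M.sav x) (M.sav y) → y ∈ A → x ∈ A := by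
  constructor
  · rintro ⟨⟨⟨h0, hadd, hsmul⟩, henv⟩, hconv⟩ x y hse hy
    have hny : -y ∈ A := by
      have := hsmul (-1 : ℝ) y hy
      rwa [neg_one_smul] at this
    have h1 : M.upp y ∈ A := (henv y hy 0 h0).1
    have h2 : M.lowp y ∈ A := (henv (-y) hny 0 h0).1
    have h3 : M.uspec y ∈ A := (henv 0 h0 y hy).1
    have h4 : M.lspec y ∈ A := (henv 0 h0 (-y) hny).1
    have h5 : M.sav y ∈ A := by
      have hsum : (M.upp y + M.lspec y) + (M.lowp y + M.uspec y) ∈ A :=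
        hadd _ (hadd _ h1 _ h4) _ (hadd _ h2 _ h3)
      exact hsmul ((2:ℝ)⁻¹) _ hsum
    have hupx : M.upp x ∈ A :=
      hconv (M.sav y) (M.upp x) (M.le_zero_upp x)
        (M.le_trans _ _ _ (M.le_upp_sav x) hse) h5
    have hlsx : M.lspec x ∈ A :=
      hconv (M.sav y) (M.lspec x) (M.le_of_sle hqr (M.sle_zero_lspec x))
        (M.le_trans _ _ _ (M.le_lspec_sav hqr x) hse) h5
    have hx : x = M.upp x + (-1:ℝ) • M.lspec x := by
      rw [neg_one_smul, M.upp_eq x]; abel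
    rw [hx]
    exact hadd _ hupx _ (hsmul _ _ hlsx)
  · intro C
    obtain ⟨h0, hadd, hsmul⟩ := hA
    have hsavmem : ∀ z ∈ A, M.sav z ∈ A := by
      intro z hz
      refine C (M.sav z) z ?_ hz
      rw [M.sav_sav hqr]
      exact M.le_refl _
    refine ⟨⟨⟨h0, hadd, hsmul⟩, ?_⟩, ?_⟩
    · intro x hx y hy
      have hbu : M.sav x + (M.sav y + M.sav x) ∈ A :=
        hadd _ (hsavmem x hx) _ (hadd _ (hsavmem y hy) _ (hsavmem x hx))
      have hbl : M.sav x + (M.sav x + M.sav y) ∈ A :=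
        hadd _ (hsavmem x hx) _ (hadd _ (hsavmem x hx) _ (hsavmem y hy))
      have hsleu : M.sle 0 (M.sav x + (M.sav y + M.sav x)) := by
        have := M.add_sle_add' (M.sle_zero_sav x)
          (M.add_sle_add' (M.sle_zero_sav y) (M.sle_zero_sav x))
        simpa using this
      have hslel : M.sle 0 (M.sav x + (M.sav x + M.sav y)) := by
        have := M.add_sle_add' (M.sle_zero_sav x)
          (M.add_sle_add' (M.sle_zero_sav x) (M.sle_zero_sav y))
        simpa using this
      constructor
      · refine C (M.uenv x y) _ ?_ hbu
        rw [M.sav_of_sle_zero hqr hsleu]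
        exact M.sav_uenv hqr x y
      · refine C (M.lenv x y) _ ?_ hbl
        rw [M.sav_of_sle_zero hqr hslel]
        exact M.sav_lenv hqr x y
    · intro x y h0y hyx hx
      exact C y x (M.sav_mono hqr h0y hyx) hx
end

section
/- Let V be a quasi-regular mixed lattice vector space, A a regular specific ideal and B an ideal with V = A ⊕ B (direct sum of subspaces). Then A = ⊥B, i.e. for all u ∈ A with u ≽ 0 and v ∈ B with v ≥ 0 one has u⌃v = 0, and A consists exactly of the elements left-disjoint from B. Moreover B = A^⊥ and V_sp = A_sp + B_sp. -/
section Aux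

variable {V : Type*} [AddCommGroup V] [Module ℝ V] (M : MLS V)

lemma sle_shift {x y : V} (h : M.sle x y) {a b : V} (hab : a - x = b - y) :
    M.sle a b := by
  have h2 := M.add_sle_left (a - x) h
  have e1 : a - x + x = a := by abel
  have e2 : a - x + y = b := by rw [hab]; abel
  rwa [e1, e2] at h2

lemma le_shift {x y : V} (h : M.le x y) {a b : V} (hab : a - x = b - y) :
    M.le a b := by
  have h2 := M.add_le_left (a - x) h
  have e1 : a - x + x = a := by abel
  have e2 : a - x + y = b := by rw [hab]; abel
  rwa [e1, e2] at h2

lemma sle0_le0 (hqr : M.QuasiRegular) {x : V} (h : M.sle 0 x) : M.le 0 x := by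
  have hneg : M.sle (-x) 0 := sle_shift M h (by abel)
  have h1 : M.sle (M.uenv 0 (-x)) 0 := hqr.1 0 (-x) 0 (M.sle_refl 0) hneg
  have h2 : M.sle 0 (M.uenv 0 (-x)) := M.uenv_sle 0 (-x)
  have h3 : M.uenv 0 (-x) = 0 := M.sle_antisymm _ _ h1 h2
  have h4 := M.uenv_le 0 (-x)
  rw [h3] at h4
  exact le_shift M h4 (by abel)

lemma lenv_add_uenv (x y : V) : M.lenv x y + M.uenv y x = x + y := by
  apply M.le_antisymm
  · have hs : M.sle y (x + y - M.lenv x y) := sle_shift M (M.lenv_sle x y) (by abel)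
    have hl : M.le x (x + y - M.lenv x y) := le_shift M (M.lenv_le x y) (by abel)
    have := M.uenv_min y x _ hs hl
    exact le_shift M this (by abel)
  · have hs : M.sle (x + y - M.uenv y x) x := sle_shift M (M.uenv_sle y x) (by abel)
    have hl : M.le (x + y - M.uenv y x) y := le_shift M (M.uenv_le y x) (by abel)
    have := M.lenv_max x y _ hs hl
    exact le_shift M this (by abel)

lemma neg_mem {S : Set V} (hS : M.IsSubspace S) {x : V} (hx : x ∈ S) : -x ∈ S := by
  have := hS.2.2 (-1) x hx
  rwa [neg_one_smul] at this

lemma mem_of_inter {A B : Set V} (hAB : A ∩ B = {0}) {t : V} (ht : t ∈ A) (ht' : t ∈ B) :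
    t = 0 := by
  have : t ∈ A ∩ B := ⟨ht, ht'⟩
  rw [hAB] at this
  exact this

/-- Claim 1: specifically positive elements of A are left-disjoint from positive
elements of B. -/
lemma disj (hqr : M.QuasiRegular) (A B : Set V)
    (hA : M.IsSpecificIdeal A) (hB : M.IsIdeal B) (hAB : A ∩ B = {0})
    {u v : V} (huA : u ∈ A) (hu0 : M.sle 0 u) (hvB : v ∈ B) (hv0 : M.le 0 v) :
    M.lenv u v = 0 := by
  set w := M.lenv u v with hw
  have hw0 : M.le 0 w := M.lenv_max u v 0 hu0 hv0
  have hwv : M.le w v := M.lenv_le u v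
  have hwB : w ∈ B := hB.2 v w hw0 hwv hvB
  have htB : M.uenv 0 w ∈ B := (hB.1.2 0 hB.1.1.1 w hwB).1
  have htu : M.sle (M.uenv 0 w) u := hqr.1 0 w u hu0 (M.lenv_sle u v)
  have htA : M.uenv 0 w ∈ A := hA.2 u _ (M.uenv_sle 0 w) htu huA
  have ht0 : M.uenv 0 w = 0 := mem_of_inter hAB htA htB
  have hwle : M.le w 0 := by
    have := M.uenv_le 0 w; rwa [ht0] at this
  exact M.le_antisymm _ _ hwle hw0

/-- Claim 4: decomposition of specifically positive elements. -/
lemma decomp (hqr : M.QuasiRegular) (A B : Set V)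
    (hA : M.IsSpecificIdeal A) (hAreg : M.Regular A) (hB : M.IsIdeal B)
    (hAB : A ∩ B = {0}) (hsum : ∀ x : V, ∃ a ∈ A, ∃ b ∈ B, x = a + b)
    {x : V} (hx : M.sle 0 x) :
    ∃ a ∈ A, M.sle 0 a ∧ ∃ b ∈ B, M.sle 0 b ∧ x = a + b := by
  obtain ⟨a, haA, b, hbB, hxab⟩ := hsum x
  obtain ⟨u, husp, v, hvsp, hauv⟩ := hAreg a haA
  obtain ⟨huA, hu0⟩ := husp
  obtain ⟨hvA, hv0⟩ := hvsp
  -- Step A : lspec b = 0 hence 0 ≤ b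
  have hxv : M.sle 0 (x + v) := by
    have h1 : M.sle v (x + v) := sle_shift M hx (by abel)
    exact M.sle_trans _ _ _ hv0 h1
  have hnbu : M.sle (-b) u := by
    have h2 : M.sle (u - (x + v)) u := sle_shift M hxv (by abel)
    have e : -b = u - (x + v) := by
      have : x = (u - v) + b := by rw [← hauv, ← hxab]
      rw [this]; abel
    rwa [e]
  have hlspec_le : M.sle (M.uenv 0 (-b)) u := hqr.1 0 (-b) u hu0 hnbu
  have hlspecA : M.uenv 0 (-b) ∈ A := hA.2 u _ (M.uenv_sle 0 (-b)) hlspec_le huA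
  have hnbB : -b ∈ B := neg_mem M hB.1.1 hbB
  have hlspecB : M.uenv 0 (-b) ∈ B := (hB.1.2 0 hB.1.1.1 (-b) hnbB).1
  have hlspec0 : M.uenv 0 (-b) = 0 := mem_of_inter hAB hlspecA hlspecB
  have hb_pos : M.le 0 b := by
    have h5 := M.uenv_le 0 (-b)
    rw [hlspec0] at h5
    exact le_shift M h5 (by abel)
  -- Step B : lenv u b = 0, so b ≼ u + b = x + v
  have hub : M.lenv u b = 0 := disj M hqr A B hA hB hAB huA hu0 hbB hb_pos
  have hub_eq : u + b = x + v := by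
    have : x = (u - v) + b := by rw [← hauv, ← hxab]
    rw [this]; abel
  have hsbxv : M.sle b (x + v) := by
    have hid := lenv_add_uenv M u b
    rw [hub, zero_add] at hid
    have h6 := M.uenv_sle b u
    rw [hid, hub_eq] at h6
    exact h6
  -- Step C : uspec b ≼ x + v
  have huspec : M.sle (M.uenv 0 b) (x + v) := hqr.1 0 b _ hxv hsbxv
  -- Step D : lowp b = uspec b - b ≼ u, positive, in B
  have hlowp_u : M.sle (M.uenv 0 b - b) u := by
    refine sle_shift M huspec ?_
    rw [← hub_eq]; abel
  have hlowp_pos : M.le 0 (M.uenv 0 b - b) := le_shift M (M.uenv_le 0 b) (by abel)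
  have huspecB : M.uenv 0 b ∈ B := (hB.1.2 0 hB.1.1.1 b hbB).1
  have hlowpB : M.uenv 0 b - b ∈ B := by
    have := hB.1.1.2.1 _ huspecB _ hnbB
    rwa [← sub_eq_add_neg] at this
  -- Step E : uspec (lowp b) ∈ A ∩ B = {0}, so lowp b = 0 and 0 ≼ b
  have hw_u : M.sle (M.uenv 0 (M.uenv 0 b - b)) u := hqr.1 0 _ u hu0 hlowp_u
  have hwA : M.uenv 0 (M.uenv 0 b - b) ∈ A := hA.2 u _ (M.uenv_sle _ _) hw_u huA
  have hwB : M.uenv 0 (M.uenv 0 b - b) ∈ B := (hB.1.2 0 hB.1.1.1 _ hlowpB).1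
  have hw0 : M.uenv 0 (M.uenv 0 b - b) = 0 := mem_of_inter hAB hwA hwB
  have hlowp0 : M.uenv 0 b - b = 0 := by
    have h7 := M.uenv_le 0 (M.uenv 0 b - b)
    rw [hw0] at h7
    exact M.le_antisymm _ _ h7 hlowp_pos
  have hb_sp : M.sle 0 b := by
    have h8 : M.uenv 0 b = b := by
      have := sub_eq_zero.mp hlowp0; exact this
    have h9 := M.uenv_sle 0 b
    rwa [h8] at h9
  -- Step F : 0 ≼ a
  have hax : M.sle a x := by
    have h10 : M.sle a (a + b) := sle_shift M hb_sp (by abel)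
    rwa [← hxab] at h10
  have huspa : M.sle (M.uenv 0 a) x := hqr.1 0 a x hx hax
  have hlowpa_b : M.sle (M.uenv 0 a - a) b := by
    refine sle_shift M huspa ?_
    rw [hxab]; abel
  have hlowpa_pos : M.le 0 (M.uenv 0 a - a) := le_shift M (M.uenv_le 0 a) (by abel)
  have huspaA : M.uenv 0 a ∈ A := (hA.1.2 0 hA.1.1.1 a haA).1
  have hnaA : -a ∈ A := neg_mem M hA.1.1 haA
  have hlowpaA : M.uenv 0 a - a ∈ A := by
    have := hA.1.1.2.1 _ huspaA _ hnaA
    rwa [← sub_eq_add_neg] at this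
  have hw'b : M.sle (M.uenv 0 (M.uenv 0 a - a)) b := hqr.1 0 _ b hb_sp hlowpa_b
  have hw'A : M.uenv 0 (M.uenv 0 a - a) ∈ A := (hA.1.2 0 hA.1.1.1 _ hlowpaA).1
  have hw'sle : M.sle 0 (M.uenv 0 (M.uenv 0 a - a)) := M.uenv_sle _ _
  have hlw : M.lenv (M.uenv 0 (M.uenv 0 a - a)) b = 0 :=
    disj M hqr A B hA hB hAB hw'A hw'sle hbB hb_pos
  have hw'le0 : M.sle (M.uenv 0 (M.uenv 0 a - a)) 0 := by
    have := hqr.2 (M.uenv 0 (M.uenv 0 a - a)) b (M.uenv 0 (M.uenv 0 a - a))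
      (M.sle_refl _) hw'b
    rwa [hlw] at this
  have hw'0 : M.uenv 0 (M.uenv 0 a - a) = 0 := M.sle_antisymm _ _ hw'le0 hw'sle
  have hlowpa0 : M.uenv 0 a - a = 0 := by
    have h11 := M.uenv_le 0 (M.uenv 0 a - a)
    rw [hw'0] at h11
    exact M.le_antisymm _ _ h11 hlowpa_pos
  have ha_sp : M.sle 0 a := by
    have h12 : M.uenv 0 a = a := sub_eq_zero.mp hlowpa0
    have h13 := M.uenv_sle 0 a
    rwa [h12] at h13
  exact ⟨a, haA, ha_sp, b, hbB, hb_sp, hxab⟩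

end Aux


/-- If `A` is a regular specific ideal and `B` an ideal with `V = A ⊕ B`,
then `A = ⊥B` (every `(≼)`-positive element of `A` is left-disjoint from
every positive element of `B`, and `A_sp` is exactly the left-disjoint cone
of `B`), `B = A^⊥` (`B_sp` is exactly the right-disjoint cone of `A`), and
`V_sp = A_sp + B_sp`. -/
theorem stmt18 {V : Type*} [AddCommGroup V] [Module ℝ V] (M : MLS V)
    (hqr : M.QuasiRegular) (A B : Set V)
    (hA : M.IsSpecificIdeal A) (hAreg : M.Regular A) (hB : M.IsIdeal B)
    (hAB : A ∩ B = {0}) (hsum : ∀ x : V, ∃ a ∈ A, ∃ b ∈ B, x = a + b) :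
    (∀ u ∈ A, M.sle 0 u → ∀ v ∈ B, M.le 0 v → M.lenv u v = 0) ∧
    M.sp A = {x | M.sle 0 x ∧ ∀ z ∈ B, M.le 0 z → M.lenv x z = 0} ∧
    M.sp B = {x | M.sle 0 x ∧ ∀ z ∈ A, M.sle 0 z → M.lenv z x = 0} ∧
    (∀ x, M.sle 0 x → ∃ a ∈ M.sp A, ∃ b ∈ M.sp B, x = a + b) := by
  constructor
  · intro u huA hu0 v hvB hv0
    exact disj M hqr A B hA hB hAB huA hu0 hvB hv0
  refine ⟨?_, ?_, ?_⟩
  · ext x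
    constructor
    · rintro ⟨hxA, hx0⟩
      exact ⟨hx0, fun z hzB hz0 => disj M hqr A B hA hB hAB hxA hx0 hzB hz0⟩
    · rintro ⟨hx0, hd⟩
      obtain ⟨a, haA, ha0, b, hbB, hb0, hxab⟩ :=
        decomp M hqr A B hA hAreg hB hAB hsum hx0
      have hb_pos : M.le 0 b := sle0_le0 M hqr hb0
      have hlx : M.lenv x b = 0 := hd b hbB hb_pos
      have hsbx : M.sle b x := by
        have h1 : M.sle b (a + b) := sle_shift M ha0 (by abel)
        rwa [← hxab] at h1
      have h2 := M.lenv_max x b b hsbx (M.le_refl b)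
      rw [hlx] at h2
      have hb0' : b = 0 := M.le_antisymm _ _ h2 hb_pos
      have hxa : x = a := by rw [hxab, hb0', add_zero]
      exact ⟨hxa ▸ haA, hx0⟩
  · ext x
    constructor
    · rintro ⟨hxB, hx0⟩
      exact ⟨hx0, fun z hzA hz0 =>
        disj M hqr A B hA hB hAB hzA hz0 hxB (sle0_le0 M hqr hx0)⟩
    · rintro ⟨hx0, hd⟩
      obtain ⟨a, haA, ha0, b, hbB, hb0, hxab⟩ :=
        decomp M hqr A B hA hAreg hB hAB hsum hx0
      have hlx : M.lenv a x = 0 := hd a haA ha0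
      have hax : M.le a x := by
        have h1 : M.le a (a + b) := le_shift M (sle0_le0 M hqr hb0) (by abel)
        rwa [← hxab] at h1
      have h2 := M.lenv_max a x a (M.sle_refl a) hax
      rw [hlx] at h2
      have ha0' : a = 0 := M.le_antisymm _ _ h2 (sle0_le0 M hqr ha0)
      have hxb : x = b := by rw [hxab, ha0', zero_add]
      exact ⟨hxb ▸ hbB, hx0⟩
  · intro x hx
    obtain ⟨a, haA, ha0, b, hbB, hb0, hxab⟩ :=
      decomp M hqr A B hA hAreg hB hAB hsum hx
    exact ⟨a, ⟨haA, ha0⟩, b, ⟨hbB, hb0⟩, hxab⟩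
end

section
/- Let V be a quasi-regular mixed lattice vector space and P : V → V a map satisfying: (P1) P is linear and P² = P; (P2) 0 ≤ Px ≤ x for every x ≥ 0; (P3) 0 ≼ Px ≼ x for every x ≽ 0. Then A = range(P) and B = range(I − P) are subspaces with A ∩ B = {0}, V = A ⊕ B, V_p = A_p + B_p and V_sp = A_sp + B_sp (i.e. V = A ⊕ B is a mixed-order direct sum), and P, I − P are the associated projections. -/
/-- If `P : V → V` is linear and idempotent with `0 ≤ Px ≤ x` for `x ≥ 0` and
`0 ≼ Px ≼ x` for `x ≽ 0`, then `A = range P` and `B = range (I − P)` give a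
mixed-order direct sum `V = A ⊕ B` with `V_p = A_p + B_p`,
`V_sp = A_sp + B_sp`, and `P`, `I − P` are the associated projections. -/
theorem stmt19 {V : Type*} [AddCommGroup V] [Module ℝ V] (M : MLS V)
    (hqr : M.QuasiRegular) (P : V → V)
    (hlin : IsLinearMap ℝ P) (hidem : ∀ x, P (P x) = P x)
    (hP2 : ∀ x, M.le 0 x → M.le 0 (P x) ∧ M.le (P x) x)
    (hP3 : ∀ x, M.sle 0 x → M.sle 0 (P x) ∧ M.sle (P x) x) :
    (Set.range P ∩ Set.range (fun x => x - P x) = {0}) ∧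
    (∀ x : V, ∃ a ∈ Set.range P, ∃ b ∈ Set.range (fun x => x - P x), x = a + b) ∧
    (∀ x, M.le 0 x → ∃ a ∈ M.pos (Set.range P),
      ∃ b ∈ M.pos (Set.range (fun x => x - P x)), x = a + b) ∧
    (∀ x, M.sle 0 x → ∃ a ∈ M.sp (Set.range P),
      ∃ b ∈ M.sp (Set.range (fun x => x - P x)), x = a + b) ∧
    (∀ x : V, P x ∈ Set.range P ∧ x - P x ∈ Set.range (fun x => x - P x) ∧
      x = P x + (x - P x)) := by
  refine ⟨?_, ?_, ?_, ?_, ?_⟩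
  · ext y
    simp only [Set.mem_inter_iff, Set.mem_range, Set.mem_singleton_iff]
    constructor
    · rintro ⟨⟨a, ha⟩, ⟨b, hb⟩⟩
      have h1 : P y = y := by rw [← ha, hidem]
      have h2 : P y = 0 := by
        rw [← hb, hlin.map_sub, hidem, sub_self]
      rw [← h1, h2]
    · rintro rfl
      have hP0 : P 0 = 0 := by
        have := hlin.map_smul (0:ℝ) 0; simpa using this
      exact ⟨⟨0, hP0⟩, ⟨0, by rw [hP0]; simp⟩⟩
  · intro x
    exact ⟨P x, ⟨x, rfl⟩, x - P x, ⟨x, rfl⟩, by abel⟩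
  · intro x hx
    obtain ⟨h1, h2⟩ := hP2 x hx
    refine ⟨P x, ⟨⟨x, rfl⟩, h1⟩, x - P x, ⟨⟨x, rfl⟩, ?_⟩, by abel⟩
    have := M.add_le_left (-P x) h2
    simpa [sub_eq_neg_add] using this
  · intro x hx
    obtain ⟨h1, h2⟩ := hP3 x hx
    refine ⟨P x, ⟨⟨x, rfl⟩, h1⟩, x - P x, ⟨⟨x, rfl⟩, ?_⟩, by abel⟩
    have := M.add_sle_left (-P x) h2
    simpa [sub_eq_neg_add] using this
  · intro x
    exact ⟨⟨x, rfl⟩, ⟨x, rfl⟩, by abel⟩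
end
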